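/- Let G' be a 2-connected signed graph whose positive edges form a spanning tree T and whose negative edges are X'. Let A ⊆ X' be such that the union D_A of the fundamental circuits C_a (a ∈ A) is 2-connected, and suppose X' − A contains no loop. Then either (i) A = X' and D_A = G', or (ii) there exists x ∈ X' − A such that D_A ∩ C_x is a non-trivial path (whence D_{A∪{x}} is 2-connected), or (iii) A contains only loops. -/

import Mathlib

open Finset
open scoped Classical

noncomputable section

namespace SignedCircuitCover

variable {V E : Type} [Fintype V] [Fintype E] [DecidableEq V] [DecidableEq E]

/-- `e` is a loop. -/
def IsLoop (ends : E → Sym2 V) (e : E) : Prop := (ends e).IsDiag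

/-- The vertices incident with an edge of `F`. -/
def support (ends : E → Sym2 V) (F : Finset E) : Finset V :=
  Finset.univ.filter fun v => ∃ e ∈ F, v ∈ ends e

/-- Degree of `v` in the subgraph with edge set `F` (a loop counts twice). -/
def degree (ends : E → Sym2 V) (F : Finset E) (v : V) : ℕ :=
  ∑ e ∈ F, (if ends e = Sym2.diag v then 2 else if v ∈ ends e then 1 else 0)

/-- Reachability inside the edge set `F`. -/
def Reach (ends : E → Sym2 V) (F : Finset E) : V → V → Prop :=
  Relation.ReflTransGen fun a b => ∃ e ∈ F, ends e = s(a, b)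

/-- The subgraph with edge set `F` is connected. -/
def ConnectedOn (ends : E → Sym2 V) (F : Finset E) : Prop :=
  ∀ u ∈ support ends F, ∀ v ∈ support ends F, Reach ends F u v

/-- The whole graph is connected. -/
def Connected (ends : E → Sym2 V) : Prop :=
  ∀ u v : V, Reach ends (Finset.univ : Finset E) u v

/-- `F` is the edge set of a circuit (connected, 2-regular; a loop is a circuit). -/
def IsCircuit (ends : E → Sym2 V) (F : Finset E) : Prop :=
  F.Nonempty ∧ ConnectedOn ends F ∧ ∀ v ∈ support ends F, degree ends F v = 2

/-- `F` is the edge set of an Eulerian subgraph (connected, all degrees even). -/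
def IsEulerianOn (ends : E → Sym2 V) (F : Finset E) : Prop :=
  ConnectedOn ends F ∧ ∀ v ∈ support ends F, Even (degree ends F v)

/-- Negative edges of `F` (`sgn e = true` means `e` is negative). -/
def negEdges (sgn : E → Bool) (F : Finset E) : Finset E := F.filter fun e => sgn e = true

def IsBalancedCircuit (ends : E → Sym2 V) (sgn : E → Bool) (F : Finset E) : Prop :=
  IsCircuit ends F ∧ Even (negEdges sgn F).card

def IsUnbalancedCircuit (ends : E → Sym2 V) (sgn : E → Bool) (F : Finset E) : Prop :=
  IsCircuit ends F ∧ Odd (negEdges sgn F).card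

/-- `P` is the edge set of a path with (distinct) end-vertices `u` and `v`. -/
def IsPath (ends : E → Sym2 V) (P : Finset E) (u v : V) : Prop :=
  P.Nonempty ∧ ConnectedOn ends P ∧ u ≠ v ∧
    u ∈ support ends P ∧ v ∈ support ends P ∧
    degree ends P u = 1 ∧ degree ends P v = 1 ∧
    ∀ w ∈ support ends P, w ≠ u → w ≠ v → degree ends P w = 2

/-- A short barbell: two unbalanced circuits meeting at exactly one vertex. -/
def IsShortBarbell (ends : E → Sym2 V) (sgn : E → Bool) (F : Finset E) : Prop :=
  ∃ C₁ C₂ : Finset E, Disjoint C₁ C₂ ∧ F = C₁ ∪ C₂ ∧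
    IsUnbalancedCircuit ends sgn C₁ ∧ IsUnbalancedCircuit ends sgn C₂ ∧
    ∃ v : V, support ends C₁ ∩ support ends C₂ = {v}

/-- A long barbell: two disjoint unbalanced circuits joined by a path meeting
them only at its end-vertices. -/
def IsLongBarbell (ends : E → Sym2 V) (sgn : E → Bool) (F : Finset E) : Prop :=
  ∃ (C₁ C₂ P : Finset E) (u v : V),
    Disjoint C₁ C₂ ∧ Disjoint C₁ P ∧ Disjoint C₂ P ∧ F = C₁ ∪ C₂ ∪ P ∧
    IsUnbalancedCircuit ends sgn C₁ ∧ IsUnbalancedCircuit ends sgn C₂ ∧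
    Disjoint (support ends C₁) (support ends C₂) ∧
    IsPath ends P u v ∧
    support ends P ∩ support ends C₁ = {u} ∧
    support ends P ∩ support ends C₂ = {v}

def IsBarbell (ends : E → Sym2 V) (sgn : E → Bool) (F : Finset E) : Prop :=
  IsShortBarbell ends sgn F ∨ IsLongBarbell ends sgn F

/-- A signed circuit: a balanced circuit, a short barbell or a long barbell. -/
def IsSignedCircuit (ends : E → Sym2 V) (sgn : E → Bool) (F : Finset E) : Prop :=
  IsBalancedCircuit ends sgn F ∨ IsShortBarbell ends sgn F ∨ IsLongBarbell ends sgn F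

/-- `e` is a bridge (cut-edge) of the subgraph with edge set `F`. -/
def IsBridgeIn (ends : E → Sym2 V) (F : Finset E) (e : E) : Prop :=
  e ∈ F ∧ ∀ a b : V, ends e = s(a, b) → ¬ Reach ends (F.erase e) a b

/-- The bridges of the whole graph. -/
def bridges (ends : E → Sym2 V) : Finset E :=
  Finset.univ.filter fun e => IsBridgeIn ends Finset.univ e

/-- The non-bridge edges of the whole graph. -/
def nonbridges (ends : E → Sym2 V) : Finset E := Finset.univ \ bridges ends

/-- Reachability inside `F` avoiding the vertex `x`. -/
def ReachAvoid (ends : E → Sym2 V) (F : Finset E) (x : V) : V → V → Prop :=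
  Relation.ReflTransGen fun a b => a ≠ x ∧ b ≠ x ∧ ∃ e ∈ F, ends e = s(a, b)

/-- `x` is a cut-vertex of the subgraph with edge set `F`. -/
def IsCutVertexOn (ends : E → Sym2 V) (F : Finset E) (x : V) : Prop :=
  ∃ a ∈ support ends F, ∃ b ∈ support ends F,
    a ≠ x ∧ b ≠ x ∧ Reach ends F a b ∧ ¬ ReachAvoid ends F x a b

/-- The subgraph with edge set `F` is 2-connected (connected and without cut-vertices). -/
def TwoConnectedOn (ends : E → Sym2 V) (F : Finset E) : Prop :=
  ConnectedOn ends F ∧ ∀ x : V, ¬ IsCutVertexOn ends F x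

/-- The whole graph is 2-connected. -/
def TwoConnected (ends : E → Sym2 V) : Prop :=
  Connected ends ∧ ∀ x : V, ¬ IsCutVertexOn ends (Finset.univ : Finset E) x

/-- Total length of a collection of subgraphs. -/
def totalLength (𝒞 : List (Finset E)) : ℕ := (𝒞.map Finset.card).sum

/-- The width of the edge `e` with respect to the collection `𝒞`. -/
def widthAt (𝒞 : List (Finset E)) (e : E) : ℕ := (𝒞.filter fun C => e ∈ C).length

/-- `𝒞` covers every edge of the graph. -/
def CoversAll (𝒞 : List (Finset E)) : Prop := ∀ e : E, ∃ C ∈ 𝒞, e ∈ C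

/-- A tree of Eulerian graphs: connected, and after deleting all bridges every
component is Eulerian (equivalently all degrees in the bridgeless part are even). -/
def IsTreeOfEulerian (ends : E → Sym2 V) : Prop :=
  Connected ends ∧ ∀ v : V, Even (degree ends (nonbridges ends) v)

/-- Non-bridge non-loop edges. -/
def nbnl (ends : E → Sym2 V) : Finset E :=
  (nonbridges ends).filter fun e => ¬ IsLoop ends e

/-- A tree of circuits: connected, and after deleting all bridges and loops every
vertex has degree 0 or 2 (each component is an isolated vertex or a circuit). -/
def IsTreeOfCircuits (ends : E → Sym2 V) : Prop :=
  Connected ends ∧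
    ∀ v : V, degree ends (nbnl ends) v = 0 ∨ degree ends (nbnl ends) v = 2

/-- The balloon containing `v`: the edge set of the component of `v` in the
graph of non-bridge non-loop edges. -/
def compBalloon (ends : E → Sym2 V) (v : V) : Finset E :=
  (nbnl ends).filter fun e => ∃ w ∈ ends e, Reach ends (nbnl ends) v w

/-- Valency of the balloon of `v`: the number of bridges and loops incident
with its component. -/
def balloonValency (ends : E → Sym2 V) (v : V) : ℕ :=
  (Finset.univ.filter fun e =>
    (IsBridgeIn ends Finset.univ e ∨ IsLoop ends e) ∧
      ∃ w ∈ ends e, Reach ends (nbnl ends) v w).card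

/-- A balloon consisting of a single negative loop. -/
def IsNegLoopBalloon (ends : E → Sym2 V) (sgn : E → Bool) (B : Finset E) : Prop :=
  ∃ e : E, IsLoop ends e ∧ sgn e = true ∧ B = {e}

/-- A leaf balloon: a negative loop, or a nontrivial balloon of valency 1. -/
def IsLeafBalloon (ends : E → Sym2 V) (sgn : E → Bool) (B : Finset E) : Prop :=
  IsNegLoopBalloon ends sgn B ∨
    ∃ v : V, B = compBalloon ends v ∧ B.Nonempty ∧ balloonValency ends v = 1

/-- A leaf circuit: a negative loop, or a balloon of valency 1 which is a circuit. -/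
def IsLeafCircuit (ends : E → Sym2 V) (sgn : E → Bool) (B : Finset E) : Prop :=
  IsNegLoopBalloon ends sgn B ∨
    ∃ v : V, B = compBalloon ends v ∧ IsCircuit ends B ∧ balloonValency ends v = 1

/-- An inner circuit: a balloon of valency at least 2 which is a circuit. -/
def IsInnerCircuit (ends : E → Sym2 V) (B : Finset E) : Prop :=
  ∃ v : V, B = compBalloon ends v ∧ IsCircuit ends B ∧ 2 ≤ balloonValency ends v

/-- Number of unbalanced circuits of a tree of circuits: negative loops together
with the unbalanced (nontrivial) balloons. -/
def numUnbalancedCircuits (ends : E → Sym2 V) (sgn : E → Bool) : ℕ :=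
  (Finset.univ.filter fun e : E => IsLoop ends e ∧ sgn e = true).card +
    Set.ncard {B : Finset E |
      (∃ v : V, B = compBalloon ends v) ∧ B.Nonempty ∧ Odd (negEdges sgn B).card}

/-- Flow-admissibility: every edge lies in a signed circuit (Bouchet). -/
def FlowAdmissible (ends : E → Sym2 V) (sgn : E → Bool) : Prop :=
  ∀ e : E, ∃ C : Finset E, IsSignedCircuit ends sgn C ∧ e ∈ C

/-- `e` has exactly one end-vertex in `U`. -/
def crosses (ends : E → Sym2 V) (U : Finset V) (e : E) : Prop :=
  ∃ a b : V, ends e = s(a, b) ∧ ((a ∈ U ∧ b ∉ U) ∨ (a ∉ U ∧ b ∈ U))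

/-- Switching the signature at the vertex set `U`. -/
def switch (ends : E → Sym2 V) (U : Finset V) (sgn : E → Bool) : E → Bool :=
  fun e => if crosses ends U e then ! (sgn e) else sgn e

/-- The number of negative edges of a signature. -/
def negCount (sgn : E → Bool) : ℕ := (Finset.univ.filter fun e => sgn e = true).card

/-- `sgn` is a minimum signature: no equivalent (switched) signature has fewer
negative edges. -/
def IsMinSignature (ends : E → Sym2 V) (sgn : E → Bool) : Prop :=
  ∀ U : Finset V, negCount sgn ≤ negCount (switch ends U sgn)

/-- `{e₁, e₂}` is a 2-edge-cut of the subgraph with edge set `F`. -/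
def IsTwoEdgeCut (ends : E → Sym2 V) (F : Finset E) (e₁ e₂ : E) : Prop :=
  e₁ ≠ e₂ ∧ e₁ ∈ F ∧ e₂ ∈ F ∧ ¬ IsBridgeIn ends F e₁ ∧ ¬ IsBridgeIn ends F e₂ ∧
    (∀ a b : V, ends e₁ = s(a, b) → ¬ Reach ends ((F.erase e₁).erase e₂) a b) ∧
    (∀ a b : V, ends e₂ = s(a, b) → ¬ Reach ends ((F.erase e₁).erase e₂) a b)

/-- `b` is a bridge of `F` whose removal leaves two parts which are both unbalanced. -/
def SeparatesUnbalanced (ends : E → Sym2 V) (sgn : E → Bool) (F : Finset E) (b : E) : Prop :=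
  IsBridgeIn ends F b ∧
    ∀ a c : V, ends b = s(a, c) →
      (∃ C ⊆ F.erase b, IsUnbalancedCircuit ends sgn C ∧
        ∃ w ∈ support ends C, Reach ends (F.erase b) a w) ∧
      (∃ C ⊆ F.erase b, IsUnbalancedCircuit ends sgn C ∧
        ∃ w ∈ support ends C, Reach ends (F.erase b) c w)

/-- `T` is a spanning tree of the whole graph: spanning, connected and acyclic. -/
def IsSpanningTree (ends : E → Sym2 V) (T : Finset E) : Prop :=
  (∀ u v : V, Reach ends T u v) ∧ ∀ C ⊆ T, ¬ IsCircuit ends C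

set_option linter.unusedSectionVars false
set_option maxHeartbeats 1000000

section Basic
variable (ends : E → Sym2 V)

lemma sym2_cases (s : Sym2 V) : ∃ a b, s = s(a, b) := by
  induction s using Sym2.ind with
  | _ a b => exact ⟨a, b, rfl⟩

/-- contribution of an edge to the degree of `v`. -/
def ctb (v : V) (e : E) : ℕ :=
  if ends e = Sym2.diag v then 2 else if v ∈ ends e then 1 else 0

lemma degree_eq_sum_ctb (F : Finset E) (v : V) :
    degree ends F v = ∑ e ∈ F, ctb ends v e := rfl

variable {ends}

lemma ctb_pos_iff {v : V} {e : E} : 0 < ctb ends v e ↔ v ∈ ends e := by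
  unfold ctb
  split_ifs with h1 h2
  · simp only [Nat.zero_lt_succ, true_iff]
    rw [h1, Sym2.diag]; simp
  · simp [h2]
  · simp [h2]

lemma ctb_le_two (v : V) (e : E) : ctb ends v e ≤ 2 := by
  unfold ctb; split_ifs <;> omega

lemma ctb_eq_one {v : V} {e : E} (hv : v ∈ ends e) (hd : ¬ (ends e).IsDiag) :
    ctb ends v e = 1 := by
  unfold ctb
  rw [if_neg, if_pos hv]
  intro h; rw [h] at hd; exact hd (Sym2.diag_isDiag v)

lemma ctb_eq_zero {v : V} {e : E} (hv : v ∉ ends e) : ctb ends v e = 0 := by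
  have : ¬ (0 < ctb ends v e) := fun h => hv (ctb_pos_iff.1 h)
  omega

lemma ctb_eq_two_of_diag {v : V} {e : E} (h : ends e = Sym2.diag v) :
    ctb ends v e = 2 := if_pos h

lemma mem_support_iff {F : Finset E} {v : V} :
    v ∈ support ends F ↔ ∃ e ∈ F, v ∈ ends e := by simp [support]

lemma mem_support_of {F : Finset E} {v : V} {e : E} (he : e ∈ F) (hv : v ∈ ends e) :
    v ∈ support ends F := mem_support_iff.2 ⟨e, he, hv⟩

lemma support_mono {F G : Finset E} (h : F ⊆ G) : support ends F ⊆ support ends G := by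
  intro v hv
  obtain ⟨e, he, hv⟩ := mem_support_iff.1 hv
  exact mem_support_of (h he) hv

lemma support_union (F G : Finset E) :
    support ends (F ∪ G) = support ends F ∪ support ends G := by
  ext v
  simp only [mem_support_iff, Finset.mem_union]
  constructor
  · rintro ⟨e, he | he, hv⟩
    · exact Or.inl ⟨e, he, hv⟩
    · exact Or.inr ⟨e, he, hv⟩
  · rintro (⟨e, he, hv⟩ | ⟨e, he, hv⟩)
    · exact ⟨e, Or.inl he, hv⟩
    · exact ⟨e, Or.inr he, hv⟩

lemma degree_eq_zero_of_not_mem {F : Finset E} {v : V} (h : v ∉ support ends F) :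
    degree ends F v = 0 := by
  rw [degree_eq_sum_ctb]
  refine Finset.sum_eq_zero fun e he => ?_
  by_contra hne
  exact h (mem_support_of he (ctb_pos_iff.1 (Nat.pos_of_ne_zero hne)))

lemma mem_support_iff_degree_pos {F : Finset E} {v : V} :
    v ∈ support ends F ↔ 0 < degree ends F v := by
  constructor
  · intro hv
    obtain ⟨e, he, hv⟩ := mem_support_iff.1 hv
    rw [degree_eq_sum_ctb]
    exact lt_of_lt_of_le (ctb_pos_iff.2 hv) (Finset.single_le_sum (fun _ _ => Nat.zero_le _) he)
  · intro h
    by_contra hv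
    rw [degree_eq_zero_of_not_mem hv] at h
    exact Nat.lt_irrefl 0 h

lemma degree_mono {F G : Finset E} (h : F ⊆ G) (v : V) :
    degree ends F v ≤ degree ends G v := by
  rw [degree_eq_sum_ctb, degree_eq_sum_ctb]
  exact Finset.sum_le_sum_of_subset h

lemma degree_erase_add {F : Finset E} {e : E} (he : e ∈ F) (v : V) :
    degree ends (F.erase e) v + ctb ends v e = degree ends F v := by
  rw [degree_eq_sum_ctb, degree_eq_sum_ctb]
  exact Finset.sum_erase_add _ _ he

lemma degree_insert {F : Finset E} {e : E} (he : e ∉ F) (v : V) :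
    degree ends (insert e F) v = ctb ends v e + degree ends F v := by
  rw [degree_eq_sum_ctb, degree_eq_sum_ctb]
  exact Finset.sum_insert he

lemma sum_ctb (e : E) : ∑ v : V, ctb ends v e = 2 := by
  obtain ⟨a, b, hab⟩ := sym2_cases (ends e)
  by_cases h : a = b
  · subst h
    have : ∀ v : V, ctb ends v e = if v = a then 2 else 0 := by
      intro v
      unfold ctb
      rw [hab]
      by_cases hv : v = a
      · subst hv; rw [if_pos rfl, if_pos]; rw [Sym2.diag]
      · rw [if_neg hv, if_neg, if_neg]
        · simp [Sym2.mem_iff, hv]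
        · rw [Sym2.diag, Sym2.eq_iff]; rintro (⟨h1, h2⟩ | ⟨h1, h2⟩) <;> exact hv h1.symm
    rw [Finset.sum_congr rfl fun v _ => this v]
    simp
  · have : ∀ v : V, ctb ends v e = if v = a ∨ v = b then 1 else 0 := by
      intro v
      unfold ctb
      rw [hab]
      rw [if_neg]
      · by_cases hv : v = a ∨ v = b
        · rw [if_pos, if_pos hv]; rw [Sym2.mem_iff]; tauto
        · rw [if_neg, if_neg hv]; rw [Sym2.mem_iff]; tauto
      · intro hd
        have := Sym2.mk_isDiag_iff.1 (hd ▸ Sym2.diag_isDiag v)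
        exact h this
    rw [Finset.sum_congr rfl fun v _ => this v]
    have h2 : (∑ v : V, if v = a ∨ v = b then 1 else 0)
        = ∑ v ∈ Finset.univ.filter (fun v => v = a ∨ v = b), (1 : ℕ) :=
      (Finset.sum_filter _ _).symm
    rw [h2]
    have h3 : Finset.univ.filter (fun v => v = a ∨ v = b) = ({a, b} : Finset V) := by
      ext v; simp
    rw [h3, Finset.sum_const, smul_eq_mul, mul_one,
      Finset.card_insert_of_notMem (by simp [h]), Finset.card_singleton]

lemma handshake (F : Finset E) : ∑ v : V, degree ends F v = 2 * F.card := by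
  have : ∑ v : V, degree ends F v = ∑ e ∈ F, ∑ v : V, ctb ends v e := by
    rw [Finset.sum_comm]
    rfl
  rw [this]
  rw [Finset.sum_congr rfl fun e _ => sum_ctb e]
  rw [Finset.sum_const, smul_eq_mul, mul_comm]


end Basic

section Reach
variable {ends : E → Sym2 V} {F G : Finset E} {u v w : V}

lemma reach_mono (h : F ⊆ G) (hr : Reach ends F u v) : Reach ends G u v :=
  Relation.ReflTransGen.mono (fun a b ⟨e, he, hab⟩ => ⟨e, h he, hab⟩) _ _ hr

lemma reach_symm (hr : Reach ends F u v) : Reach ends F v u := by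
  refine @Std.Symm.symm _ _ (@Relation.ReflTransGen.stdSymm _ _ ⟨?_⟩) _ _ hr
  rintro a b ⟨e, he, hab⟩
  exact ⟨e, he, hab.trans Sym2.eq_swap⟩

lemma reach_trans (h1 : Reach ends F u v) (h2 : Reach ends F v w) : Reach ends F u w :=
  h1.trans h2

lemma reach_closed (S : Set V) (hu : u ∈ S)
    (hS : ∀ e ∈ F, ∀ a b : V, ends e = s(a, b) → a ∈ S → b ∈ S)
    (h : Reach ends F u v) : v ∈ S := by
  induction h with
  | refl => exact hu
  | tail _ step ih =>
    obtain ⟨e, he, hab⟩ := step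
    exact hS e he _ _ hab ih

lemma reach_left_mem_support (h : Reach ends F u v) (hne : u ≠ v) :
    u ∈ support ends F := by
  rcases Relation.ReflTransGen.cases_head h with h | ⟨c, ⟨e, he, hab⟩, _⟩
  · exact absurd h hne
  · exact mem_support_of he (hab ▸ Sym2.mem_mk_left u c)

lemma reach_right_mem_support (h : Reach ends F u v) (hne : u ≠ v) :
    v ∈ support ends F :=
  reach_left_mem_support (reach_symm h) (Ne.symm hne)

/-- the edge set of the connected component of `w`. -/
def comp (ends : E → Sym2 V) (F : Finset E) (w : V) : Finset E :=
  F.filter fun e => ∃ z ∈ ends e, Reach ends F w z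

lemma comp_subset : comp ends F w ⊆ F := Finset.filter_subset _ _

lemma reach_comp (h : Reach ends F w v) : Reach ends (comp ends F w) w v := by
  have main : ∀ a, Reach ends F a v → Reach ends F w a → Reach ends (comp ends F w) a v := by
    intro a h
    induction h using Relation.ReflTransGen.head_induction_on with
    | refl => intro _; exact Relation.ReflTransGen.refl
    | head step h' ih =>
      rename_i x c
      intro hwx
      obtain ⟨e, he, hab⟩ := step
      have hec : e ∈ comp ends F w := by
        refine Finset.mem_filter.2 ⟨he, x, hab ▸ Sym2.mem_mk_left x c, hwx⟩
      exact Relation.ReflTransGen.head ⟨e, hec, hab⟩ (ih (hwx.tail ⟨e, he, hab⟩))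
  exact main w h Relation.ReflTransGen.refl

lemma mem_comp_support (h : v ∈ support ends (comp ends F w)) : Reach ends F w v := by
  obtain ⟨e, he, hv⟩ := mem_support_iff.1 h
  obtain ⟨hF, z, hz, hwz⟩ := Finset.mem_filter.1 he
  by_cases hzv : z = v
  · exact hzv ▸ hwz
  · have : ends e = s(z, v) := (Sym2.mem_and_mem_iff hzv).1 ⟨hz, hv⟩
    exact hwz.tail ⟨e, hF, this⟩

lemma comp_degree (h : Reach ends F w v) : degree ends (comp ends F w) v = degree ends F v := by
  unfold degree
  refine Finset.sum_subset comp_subset fun e he hne => ?_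
  by_contra h0
  have hv : v ∈ ends e := ctb_pos_iff.1 (Nat.pos_of_ne_zero h0)
  exact hne (Finset.mem_filter.2 ⟨he, v, hv, h⟩)

lemma comp_connectedOn : ConnectedOn ends (comp ends F w) := by
  intro a ha b hb
  exact reach_trans (reach_symm (reach_comp (mem_comp_support ha)))
    (reach_comp (mem_comp_support hb))

lemma odd_pair {u : V} (h : Odd (degree ends F u)) :
    ∃ v, v ≠ u ∧ Reach ends F u v ∧ Odd (degree ends F v) := by
  by_contra hcon
  push_neg at hcon
  have hK := handshake (ends := ends) (comp ends F u)
  have hdu : degree ends (comp ends F u) u = degree ends F u :=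
    comp_degree Relation.ReflTransGen.refl
  have heven : ∀ v ∈ Finset.univ.erase u, Even (degree ends (comp ends F u) v) := by
    intro v hv
    have hvu : v ≠ u := (Finset.mem_erase.1 hv).1
    by_cases h0 : degree ends (comp ends F u) v = 0
    · simp [h0]
    · have hvs : v ∈ support ends (comp ends F u) :=
        mem_support_iff_degree_pos.2 (Nat.pos_of_ne_zero h0)
      have hr : Reach ends F u v := mem_comp_support hvs
      rw [comp_degree hr]
      rcases Nat.even_or_odd (degree ends F v) with he | ho
      · exact he
      · exact absurd ho (hcon v hvu hr)
  have hsum : ∑ v ∈ Finset.univ.erase u, degree ends (comp ends F u) v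
      + degree ends (comp ends F u) u = ∑ v : V, degree ends (comp ends F u) v :=
    Finset.sum_erase_add _ _ (Finset.mem_univ u)
  have he1 : Even (∑ v ∈ Finset.univ.erase u, degree ends (comp ends F u) v) :=
    Finset.even_sum _ heven
  have he2 : Even (∑ v : V, degree ends (comp ends F u) v) := by
    rw [hK]; exact even_two_mul _
  rw [← hsum, Nat.even_add] at he2
  rw [hdu] at he2
  exact (Nat.not_even_iff_odd.2 h) (he2.1 he1)


end Reach

section Walks
variable {ends : E → Sym2 V} {F : Finset E}

inductive IsWalk (ends : E → Sym2 V) (F : Finset E) : V → V → List E → List V → Prop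
  | nil (v : V) : IsWalk ends F v v [] []
  | cons {a b c : V} {e : E} {l : List E} {vl : List V} :
      e ∈ F → ends e = s(a, b) → IsWalk ends F b c l vl → IsWalk ends F a c (e :: l) (a :: vl)

lemma IsWalk.reach {u v : V} {l : List E} {vl : List V} (h : IsWalk ends F u v l vl) :
    Reach ends F u v := by
  induction h with
  | nil => exact Relation.ReflTransGen.refl
  | cons he hab _ ih => exact Relation.ReflTransGen.head ⟨_, he, hab⟩ ih

lemma reach_walk {u v : V} (h : Reach ends F u v) :
    ∃ l vl, IsWalk ends F u v l vl := by
  induction h using Relation.ReflTransGen.head_induction_on with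
  | refl => exact ⟨[], [], IsWalk.nil v⟩
  | head step _ ih =>
    obtain ⟨e, he, hab⟩ := step
    obtain ⟨l, vl, hw⟩ := ih
    exact ⟨e :: l, _ :: vl, IsWalk.cons he hab hw⟩

lemma IsWalk.edges_mem {u v : V} {l : List E} {vl : List V}
    (h : IsWalk ends F u v l vl) : ∀ e ∈ l, e ∈ F := by
  induction h with
  | nil => intro e he; cases he
  | cons he _ _ ih =>
    intro f hf
    rcases List.mem_cons.1 hf with h | h
    · exact h ▸ he
    · exact ih f h

lemma IsWalk.fullV_cons {u v : V} {l : List E} {vl : List V}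
    (h : IsWalk ends F u v l vl) : ∃ t, vl ++ [v] = u :: t := by
  cases h with
  | nil => exact ⟨[], rfl⟩
  | cons _ _ h' => exact ⟨_, rfl⟩

lemma IsWalk.edge_ends_mem {u v : V} {l : List E} {vl : List V}
    (h : IsWalk ends F u v l vl) : ∀ e ∈ l, ∀ x ∈ ends e, x ∈ vl ++ [v] := by
  induction h with
  | nil => intro e he; cases he
  | cons he hab hsub ih =>
    rename_i a b c e l vl
    intro f hf x hx
    rcases List.mem_cons.1 hf with h | h
    · subst h
      rw [hab, Sym2.mem_iff] at hx
      rcases hx with rfl | rfl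
      · exact List.mem_cons_self
      · obtain ⟨t, ht⟩ := hsub.fullV_cons
        have : x ∈ vl ++ [c] := by rw [ht]; exact List.mem_cons_self
        exact List.mem_cons_of_mem _ this
    · exact List.mem_cons_of_mem _ (ih f h x hx)

lemma walk_split_vertex {u v x : V} {l : List E} {vl vl₁ vl₂ : List V}
    (h : IsWalk ends F u v l vl) (hvl : vl = vl₁ ++ x :: vl₂) :
    ∃ l₁ l₂, l = l₁ ++ l₂ ∧ IsWalk ends F u x l₁ vl₁ ∧ IsWalk ends F x v l₂ (x :: vl₂) := by
  induction vl₁ generalizing u l vl with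
  | nil =>
    simp only [List.nil_append] at hvl
    subst hvl
    cases h with
    | cons he hab h' =>
      exact ⟨[], _, rfl, IsWalk.nil x, IsWalk.cons he hab h'⟩
  | cons y t ih =>
    rw [List.cons_append] at hvl
    subst hvl
    cases h with
    | cons he hab h' =>
      obtain ⟨l₁, l₂, hl, hw1, hw2⟩ := ih h' rfl
      exact ⟨_ :: l₁, l₂, by rw [hl]; rfl, IsWalk.cons he hab hw1, hw2⟩

lemma exists_nodup_walk : ∀ (n : ℕ) {u v : V} {l : List E} {vl : List V},
    l.length ≤ n → IsWalk ends F u v l vl →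
    ∃ l' vl', IsWalk ends F u v l' vl' ∧ (vl' ++ [v]).Nodup ∧
      ∀ x ∈ vl' ++ [v], x ∈ vl ++ [v] := by
  intro n
  induction n with
  | zero =>
    intro u v l vl hlen h
    cases h with
    | nil => exact ⟨[], [], IsWalk.nil _, by simp, by simp⟩
    | cons _ _ _ => simp at hlen
  | succ n ih =>
    intro u v l vl hlen h
    cases h with
    | nil => exact ⟨[], [], IsWalk.nil _, by simp, by simp⟩
    | cons he hab h' =>
      rename_i b e l' vl'
      by_cases hu : u ∈ vl' ++ [v]
      · rcases List.mem_append.1 hu with hmem | hlast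
        · -- u appears later in vl' : split the tail walk at u
          obtain ⟨w₁, w₂, hw⟩ := List.append_of_mem hmem
          obtain ⟨l₁, l₂, hl12, _, hw2⟩ := walk_split_vertex h' hw
          have hlen2 : l₂.length ≤ n := by
            have h1 : l'.length ≤ n := by simpa using hlen
            have h2 : l'.length = l₁.length + l₂.length := by rw [hl12, List.length_append]
            omega
          obtain ⟨l'', vl'', hwalk, hnd, hsub⟩ := ih hlen2 hw2
          refine ⟨l'', vl'', hwalk, hnd, fun x hx => ?_⟩
          have hx2 := hsub x hx
          rw [List.cons_append, List.mem_cons]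
          rcases List.mem_cons.1 hx2 with h1 | h1
          · subst h1
            exact Or.inr (List.mem_append.2 (Or.inl hmem))
          · refine Or.inr ?_
            rcases List.mem_append.1 h1 with h2 | h2
            · refine List.mem_append.2 (Or.inl ?_)
              rw [hw]
              exact List.mem_append.2 (Or.inr (List.mem_cons_of_mem _ h2))
            · exact List.mem_append.2 (Or.inr h2)
        · -- u = v : take the empty walk
          have huv : u = v := by simpa using hlast
          subst huv
          refine ⟨[], [], IsWalk.nil _, by simp, fun x hx => ?_⟩
          have : x = u := by simpa using hx
          subst this
          exact List.mem_cons_self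
      · -- u fresh : recurse on the tail
        have hlen2 : l'.length ≤ n := by simpa using hlen
        obtain ⟨l'', vl'', hwalk, hnd, hsub⟩ := ih hlen2 h'
        refine ⟨e :: l'', u :: vl'', IsWalk.cons he hab hwalk, ?_, ?_⟩
        · rw [List.cons_append, List.nodup_cons]
          exact ⟨fun hc => hu (hsub u hc), hnd⟩
        · intro x hx
          rw [List.cons_append, List.mem_cons] at hx
          rw [List.cons_append, List.mem_cons]
          rcases hx with rfl | hx
          · exact Or.inl rfl
          · exact Or.inr (hsub x hx)

lemma IsWalk.nil_inv {b c : V} {vl : List V} (h : IsWalk ends F b c [] vl) :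
    b = c ∧ vl = [] := by cases h; exact ⟨rfl, rfl⟩

lemma single_edge_path {a b : V} {e : E} (he : ends e = s(a, b)) (hne : a ≠ b) :
    IsPath ends {e} a b ∧ support ends ({e} : Finset E) ⊆ {a, b} := by
  have hdiag : ¬ (ends e).IsDiag := by rw [he, Sym2.mk_isDiag_iff]; exact hne
  have hsup : support ends ({e} : Finset E) ⊆ ({a, b} : Finset V) := by
    intro x hx
    obtain ⟨f, hf, hxf⟩ := mem_support_iff.1 hx
    rw [Finset.mem_singleton] at hf
    subst hf
    rw [he, Sym2.mem_iff] at hxf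
    simpa using hxf
  have hmem : ∀ x ∈ ({a, b} : Finset V), x ∈ support ends ({e} : Finset E) := by
    intro x hx
    refine mem_support_of (Finset.mem_singleton_self e) ?_
    rw [he, Sym2.mem_iff]
    simpa using hx
  have hreach : Reach ends ({e} : Finset E) a b :=
    Relation.ReflTransGen.single ⟨e, Finset.mem_singleton_self e, he⟩
  have hconn : ConnectedOn ends ({e} : Finset E) := by
    intro x hx y hy
    have hx' := hsup hx; have hy' := hsup hy
    simp only [Finset.mem_insert, Finset.mem_singleton] at hx' hy'
    rcases hx' with rfl | rfl <;> rcases hy' with rfl | rfl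
    · exact Relation.ReflTransGen.refl
    · exact hreach
    · exact reach_symm hreach
    · exact Relation.ReflTransGen.refl
  have hdeg : ∀ x ∈ ({a, b} : Finset V), degree ends ({e} : Finset E) x = 1 := by
    intro x hx
    have hxe : x ∈ ends e := by
      rw [he, Sym2.mem_iff]; simpa using hx
    unfold degree
    rw [Finset.sum_singleton]
    exact ctb_eq_one hxe hdiag
  refine ⟨⟨⟨e, Finset.mem_singleton_self e⟩, hconn, hne, hmem a (by simp), hmem b (by simp),
    hdeg a (by simp), hdeg b (by simp), ?_⟩, hsup⟩
  intro w hw hwa hwb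
  have := hsup hw
  simp only [Finset.mem_insert, Finset.mem_singleton] at this
  rcases this with rfl | rfl
  · exact absurd rfl hwa
  · exact absurd rfl hwb

lemma IsWalk.isPath {u v : V} {l : List E} {vl : List V}
    (h : IsWalk ends F u v l vl) (hne : l ≠ []) (hnd : (vl ++ [v]).Nodup) :
    IsPath ends l.toFinset u v ∧ support ends l.toFinset ⊆ (vl ++ [v]).toFinset := by
  induction h with
  | nil => exact absurd rfl hne
  | cons he hab h' ih =>
    rename_i a b c e l' vl'
    rw [List.cons_append, List.nodup_cons] at hnd
    obtain ⟨ha, hnd'⟩ := hnd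
    have hav : a ≠ c := fun hac => ha (by rw [hac]; exact List.mem_append.2 (Or.inr (List.mem_singleton.2 rfl)))
    by_cases hl' : l' = []
    · subst hl'
      obtain ⟨heq, hveq⟩ := h'.nil_inv
      subst heq; subst hveq
      have h1 := single_edge_path hab hav
      refine ⟨by simpa using h1.1, ?_⟩
      intro x hx
      have := h1.2 (by simpa using hx)
      simp only [Finset.mem_insert, Finset.mem_singleton] at this
      simp only [List.nil_append, List.cons_append, List.toFinset_cons, List.toFinset_nil]
      rcases this with rfl | rfl <;> simp
    · obtain ⟨hP', hsupp'⟩ := ih hl' hnd'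
      obtain ⟨hne', hconn', hbc, hbS, hcS, hdb, hdc, hint⟩ := hP'
      have haP : a ∉ support ends l'.toFinset := fun hc => ha (by
        have := hsupp' hc; rwa [List.mem_toFinset] at this)
      have heP : e ∉ l'.toFinset := by
        intro hc
        exact haP (mem_support_of hc (hab ▸ Sym2.mem_mk_left a b))
      have haneb : a ≠ b := by
        intro hval; subst hval; exact haP hbS
      have hdiag : ¬ (ends e).IsDiag := by rw [hab, Sym2.mk_isDiag_iff]; exact haneb
      have hcv : c ∉ ends e := by
        rw [hab, Sym2.mem_iff]
        rintro (rfl | rfl)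
        · exact hav rfl
        · exact hbc rfl
      have hPins : (e :: l').toFinset = insert e l'.toFinset := List.toFinset_cons
      have hsupP : ∀ x, x ∈ support ends (insert e l'.toFinset) →
          x = a ∨ x = b ∨ x ∈ support ends l'.toFinset := by
        intro x hx
        obtain ⟨f, hf, hxf⟩ := mem_support_iff.1 hx
        rcases Finset.mem_insert.1 hf with rfl | hf'
        · rw [hab, Sym2.mem_iff] at hxf
          tauto
        · exact Or.inr (Or.inr (mem_support_of hf' hxf))
      have hsubP : l'.toFinset ⊆ insert e l'.toFinset := Finset.subset_insert _ _
      have hreach_av : ∀ x ∈ support ends (insert e l'.toFinset),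
          Reach ends (insert e l'.toFinset) x c := by
        intro x hx
        have hbc' : Reach ends (insert e l'.toFinset) b c :=
          reach_mono hsubP (hconn' b hbS c hcS)
        rcases hsupP x hx with rfl | rfl | hx'
        · exact Relation.ReflTransGen.head ⟨e, Finset.mem_insert_self _ _, hab⟩ hbc'
        · exact hbc'
        · exact reach_mono hsubP (hconn' x hx' c hcS)
      have hconn : ConnectedOn ends (insert e l'.toFinset) := by
        intro x hx y hy
        exact reach_trans (hreach_av x hx) (reach_symm (hreach_av y hy))
      have hdega : degree ends (insert e l'.toFinset) a = 1 := by
        rw [degree_insert heP, ctb_eq_one (hab ▸ Sym2.mem_mk_left a b) hdiag,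
          degree_eq_zero_of_not_mem haP]
      have hdegc : degree ends (insert e l'.toFinset) c = 1 := by
        rw [degree_insert heP, ctb_eq_zero hcv, hdc]
      have haS : a ∈ support ends (insert e l'.toFinset) :=
        mem_support_of (Finset.mem_insert_self _ _) (hab ▸ Sym2.mem_mk_left a b)
      have hcS' : c ∈ support ends (insert e l'.toFinset) := support_mono hsubP hcS
      rw [hPins]
      refine ⟨⟨⟨e, Finset.mem_insert_self _ _⟩, hconn, hav, haS, hcS', hdega, hdegc, ?_⟩, ?_⟩
      · intro w hw hwa hwc
        rcases hsupP w hw with rfl | rfl | hw'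
        · exact absurd rfl hwa
        · rw [degree_insert heP, ctb_eq_one (hab ▸ Sym2.mem_mk_right _ _) hdiag, hdb]
        · by_cases hwb : w = b
          · subst hwb
            rw [degree_insert heP, ctb_eq_one (hab ▸ Sym2.mem_mk_right _ _) hdiag, hdb]
          · have hwe : w ∉ ends e := by
              rw [hab, Sym2.mem_iff]; tauto
            rw [degree_insert heP, ctb_eq_zero hwe, hint w hw' hwb hwc]
      · intro x hx
        rw [List.cons_append, List.toFinset_cons]
        rcases hsupP x hx with rfl | rfl | hx'
        · exact Finset.mem_insert_self _ _
        · exact Finset.mem_insert_of_mem (hsupp' hbS)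
        · exact Finset.mem_insert_of_mem (hsupp' hx')

lemma reach_isPath {u v : V} (hne : u ≠ v) (h : Reach ends F u v) :
    ∃ P, P ⊆ F ∧ IsPath ends P u v := by
  obtain ⟨l, vl, hw⟩ := reach_walk h
  obtain ⟨l', vl', hw', hnd, _⟩ := exists_nodup_walk l.length le_rfl hw
  have hne' : l' ≠ [] := by
    intro hc
    subst hc
    cases hw'
    exact hne rfl
  refine ⟨l'.toFinset, ?_, (hw'.isPath hne' hnd).1⟩
  intro f hf
  exact hw'.edges_mem f (List.mem_toFinset.1 hf)


end Walks



section Tree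
variable {ends : E → Sym2 V} {Tset : Finset E}

lemma support_empty : support ends (∅ : Finset E) = ∅ := by
  ext v; simp [mem_support_iff]

lemma path_plus_edge {P : Finset E} {a b : V} {e : E} (hP : IsPath ends P a b)
    (heP : e ∉ P) (hab : ends e = s(a, b)) : IsCircuit ends (insert e P) := by
  obtain ⟨hne', hconn, hne, haS, hbS, hda, hdb, hint⟩ := hP
  have hd : ¬ (ends e).IsDiag := by rw [hab, Sym2.mk_isDiag_iff]; exact hne
  have hsupp : support ends (insert e P) = support ends P := by
    apply Finset.Subset.antisymm
    · intro x hx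
      obtain ⟨f, hf, hxf⟩ := mem_support_iff.1 hx
      rcases Finset.mem_insert.1 hf with rfl | hf'
      · rw [hab, Sym2.mem_iff] at hxf
        rcases hxf with rfl | rfl
        · exact haS
        · exact hbS
      · exact mem_support_of hf' hxf
    · exact support_mono (Finset.subset_insert _ _)
  refine ⟨⟨e, Finset.mem_insert_self _ _⟩, ?_, ?_⟩
  · intro x hx y hy
    rw [hsupp] at hx hy
    exact reach_mono (Finset.subset_insert _ _) (hconn x hx y hy)
  · intro x hx
    rw [hsupp] at hx
    rw [degree_insert heP]
    by_cases hxa : x = a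
    · subst hxa
      rw [ctb_eq_one (hab ▸ Sym2.mem_mk_left _ _) hd, hda]
    · by_cases hxb : x = b
      · subst hxb
        rw [ctb_eq_one (hab ▸ Sym2.mem_mk_right _ _) hd, hdb]
      · have : x ∉ ends e := by rw [hab, Sym2.mem_iff]; tauto
        rw [ctb_eq_zero this, hint x hx hxa hxb]

lemma tree_no_loop (hAcyc : ∀ C ⊆ Tset, ¬ IsCircuit ends C) {e : E} (he : e ∈ Tset) :
    ¬ (ends e).IsDiag := by
  intro hd
  obtain ⟨w, hw⟩ : ∃ w, Sym2.diag w = ends e := ⟨_, Sym2.diag_diagElem hd⟩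
  refine hAcyc {e} (Finset.singleton_subset_iff.2 he) ⟨⟨e, Finset.mem_singleton_self e⟩, ?_, ?_⟩
  · intro x hx y hy
    obtain ⟨f, hf, hxf⟩ := mem_support_iff.1 hx
    obtain ⟨g, hg, hyg⟩ := mem_support_iff.1 hy
    rw [Finset.mem_singleton] at hf hg
    subst hf; subst hg
    rw [← hw] at hxf hyg
    rw [Sym2.diag, Sym2.mem_iff] at hxf hyg
    have hx' : x = w := by tauto
    have hy' : y = w := by tauto
    rw [hx', hy']
    exact Relation.ReflTransGen.refl
  · intro x hx
    obtain ⟨f, hf, hxf⟩ := mem_support_iff.1 hx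
    rw [Finset.mem_singleton] at hf
    subst hf
    have hx' : x = w := by
      rw [← hw, Sym2.diag, Sym2.mem_iff] at hxf; tauto
    subst hx'
    unfold degree
    rw [Finset.sum_singleton, if_pos hw.symm]

lemma tree_sep (hAcyc : ∀ C ⊆ Tset, ¬ IsCircuit ends C) {e : E} {a b : V}
    (he : e ∈ Tset) (hab : ends e = s(a, b)) : ¬ Reach ends (Tset.erase e) a b := by
  intro hr
  have hanb : a ≠ b := by
    intro h
    exact tree_no_loop hAcyc he (by rw [hab, Sym2.mk_isDiag_iff]; exact h)
  obtain ⟨P, hPsub, hP⟩ := reach_isPath hanb hr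
  have heP : e ∉ P := fun hc => Finset.notMem_erase e Tset (hPsub hc)
  refine hAcyc (insert e P) ?_ (path_plus_edge hP heP hab)
  intro f hf
  rcases Finset.mem_insert.1 hf with rfl | hf'
  · exact he
  · exact (Finset.erase_subset _ _) (hPsub hf')

lemma tree_edge_mem (hAcyc : ∀ C ⊆ Tset, ¬ IsCircuit ends C) {F' : Finset E} {e : E} {a b : V}
    (hF : F' ⊆ Tset) (hconn : ConnectedOn ends F') (he : e ∈ Tset) (hab : ends e = s(a, b))
    (ha : a ∈ support ends F') (hb : b ∈ support ends F') : e ∈ F' := by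
  by_contra heF
  have hsub : F' ⊆ Tset.erase e := fun f hf =>
    Finset.mem_erase.2 ⟨fun h => heF (h ▸ hf), hF hf⟩
  exact tree_sep hAcyc he hab (reach_mono hsub (hconn a ha b hb))

lemma reach_erase_split {F : Finset E} {e : E} {a b x : V} (he : e ∈ F)
    (hab : ends e = s(a, b)) (h : Reach ends F x a) :
    Reach ends (F.erase e) x a ∨ Reach ends (F.erase e) x b := by
  induction h using Relation.ReflTransGen.head_induction_on with
  | refl => exact Or.inl Relation.ReflTransGen.refl
  | head step _ ih =>
    rename_i y c
    obtain ⟨f, hf, hyc⟩ := step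
    by_cases hfe : f = e
    · subst hfe
      rw [hab] at hyc
      rw [Sym2.eq_iff] at hyc
      rcases hyc with ⟨rfl, rfl⟩ | ⟨rfl, rfl⟩
      · exact Or.inl Relation.ReflTransGen.refl
      · exact Or.inr Relation.ReflTransGen.refl
    · rcases ih with h' | h'
      · exact Or.inl (Relation.ReflTransGen.head ⟨f, Finset.mem_erase.2 ⟨hfe, hf⟩, hyc⟩ h')
      · exact Or.inr (Relation.ReflTransGen.head ⟨f, Finset.mem_erase.2 ⟨hfe, hf⟩, hyc⟩ h')

lemma path_split_end (hAcyc : ∀ C ⊆ Tset, ¬ IsCircuit ends C) {P : Finset E} {u v z : V} {e : E}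
    (hP : IsPath ends P u v) (hPT : P ⊆ Tset) (he : e ∈ P) (hz : z ∈ ends e) :
    Reach ends (P.erase e) z u ∨ Reach ends (P.erase e) z v := by
  by_cases hzu : z = u
  · exact Or.inl (hzu ▸ Relation.ReflTransGen.refl)
  by_cases hzv : z = v
  · exact Or.inr (hzv ▸ Relation.ReflTransGen.refl)
  obtain ⟨hne', hconn, hne, haS, hbS, hda, hdb, hint⟩ := hP
  have hd : ¬ (ends e).IsDiag := tree_no_loop hAcyc (hPT he)
  have hzS : z ∈ support ends P := mem_support_of he hz
  have hdegz : degree ends P z = 2 := hint z hzS hzu hzv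
  have herase := degree_erase_add (ends := ends) he z
  rw [ctb_eq_one hz hd] at herase
  have hodd : Odd (degree ends (P.erase e) z) := by
    have : degree ends (P.erase e) z = 1 := by omega
    rw [this]; exact odd_one
  obtain ⟨z', hz'ne, hrz', hodd'⟩ := odd_pair hodd
  by_cases hz'e : z' ∈ ends e
  · exfalso
    have hezz' : ends e = s(z, z') := (Sym2.mem_and_mem_iff (Ne.symm hz'ne)).1 ⟨hz, hz'e⟩
    refine tree_sep hAcyc (hPT he) hezz' ?_
    refine reach_mono ?_ hrz'
    intro f hf
    rw [Finset.mem_erase] at hf ⊢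
    exact ⟨hf.1, hPT hf.2⟩
  · have herase' := degree_erase_add (ends := ends) he z'
    rw [ctb_eq_zero hz'e] at herase'
    have hdegz' : Odd (degree ends P z') := by
      rw [← herase']; simpa using hodd'
    have hz'S : z' ∈ support ends P := by
      rw [mem_support_iff_degree_pos]
      rcases hdegz' with ⟨k, hk⟩
      omega
    by_cases hz'u : z' = u
    · exact Or.inl (hz'u ▸ hrz')
    by_cases hz'v : z' = v
    · exact Or.inr (hz'v ▸ hrz')
    · exfalso
      rw [hint z' hz'S hz'u hz'v] at hdegz'
      rcases hdegz' with ⟨k, hk⟩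
      omega

lemma subtree_absorb (hAcyc : ∀ C ⊆ Tset, ¬ IsCircuit ends C) {P F' : Finset E} {u v : V}
    (hP : IsPath ends P u v) (hPT : P ⊆ Tset) (hF : F' ⊆ Tset) (hconn : ConnectedOn ends F')
    (hu : u ∈ support ends F') (hv : v ∈ support ends F') : P ⊆ F' := by
  intro e he
  by_contra heF
  obtain ⟨a, b, hab⟩ := sym2_cases (ends e)
  have hPe : P.erase e ⊆ Tset.erase e := fun f hf => by
    rw [Finset.mem_erase] at hf ⊢
    exact ⟨hf.1, hPT hf.2⟩
  have hF'e : F' ⊆ Tset.erase e := fun f hf =>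
    Finset.mem_erase.2 ⟨fun h => heF (h ▸ hf), hF hf⟩
  have hgoal : ∀ c₁ c₂ : V, (c₁ = u ∨ c₁ = v) → (c₂ = u ∨ c₂ = v) →
      Reach ends (Tset.erase e) c₁ c₂ := by
    intro c₁ c₂ h1 h2
    have h1' : c₁ ∈ support ends F' := by rcases h1 with rfl | rfl <;> assumption
    have h2' : c₂ ∈ support ends F' := by rcases h2 with rfl | rfl <;> assumption
    exact reach_mono hF'e (hconn c₁ h1' c₂ h2')
  have hsa := path_split_end hAcyc hP hPT he (hab ▸ Sym2.mem_mk_left a b)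
  have hsb := path_split_end hAcyc hP hPT he (hab ▸ Sym2.mem_mk_right a b)
  have hra : Reach ends (Tset.erase e) a b := by
    rcases hsa with h1 | h1 <;> rcases hsb with h2 | h2
    · exact reach_trans (reach_mono hPe h1) (hgoal u u (Or.inl rfl) (Or.inl rfl) |>.trans
        (reach_symm (reach_mono hPe h2)))
    · exact reach_trans (reach_mono hPe h1) ((hgoal u v (Or.inl rfl) (Or.inr rfl)).trans
        (reach_symm (reach_mono hPe h2)))
    · exact reach_trans (reach_mono hPe h1) ((hgoal v u (Or.inr rfl) (Or.inl rfl)).trans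
        (reach_symm (reach_mono hPe h2)))
    · exact reach_trans (reach_mono hPe h1) ((hgoal v v (Or.inr rfl) (Or.inr rfl)).trans
        (reach_symm (reach_mono hPe h2)))
  exact tree_sep hAcyc (hPT he) hab hra

lemma subtree_connect (hAcyc : ∀ C ⊆ Tset, ¬ IsCircuit ends C) {F₁ F₂ : Finset E} {u v : V}
    (h1 : F₁ ⊆ Tset) (h2 : F₂ ⊆ Tset) (hc1 : ConnectedOn ends F₁) (hc2 : ConnectedOn ends F₂)
    (hu1 : u ∈ support ends F₁) (hu2 : u ∈ support ends F₂)
    (hv1 : v ∈ support ends F₁) (hv2 : v ∈ support ends F₂) :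
    Reach ends (F₁ ∩ F₂) u v := by
  by_cases huv : u = v
  · exact huv ▸ Relation.ReflTransGen.refl
  obtain ⟨P, hPsub, hP⟩ := reach_isPath huv (hc1 u hu1 v hv1)
  have hP2 : P ⊆ F₂ :=
    subtree_absorb hAcyc hP (hPsub.trans h1) h2 hc2 hu2 hv2
  have hPsub' : P ⊆ F₁ ∩ F₂ := Finset.subset_inter hPsub hP2
  exact reach_mono hPsub' (hP.2.1 u hP.2.2.2.1 v hP.2.2.2.2.1)

lemma tree_count (hAcyc : ∀ C ⊆ Tset, ¬ IsCircuit ends C) :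
    ∀ (n : ℕ) (F' : Finset E), F' ⊆ Tset → F'.card ≤ n → ConnectedOn ends F' →
      F'.Nonempty → (support ends F').card = F'.card + 1 := by
  intro n
  induction n with
  | zero =>
    intro F' _ hcard _ hne
    obtain ⟨e, he⟩ := hne
    have := Finset.card_pos.2 ⟨e, he⟩
    omega
  | succ n ih =>
    intro F' hsub hcard hconn hne
    obtain ⟨e, he⟩ := hne
    obtain ⟨a, b, hab⟩ := sym2_cases (ends e)
    have hanb : a ≠ b := fun h =>
      tree_no_loop hAcyc (hsub he) (by rw [hab, Sym2.mk_isDiag_iff]; exact h)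
    set Fe := F'.erase e with hFe
    have hFeT : Fe ⊆ Tset.erase e := fun f hf => by
      rw [hFe, Finset.mem_erase] at hf
      exact Finset.mem_erase.2 ⟨hf.1, hsub hf.2⟩
    have hnr : ¬ Reach ends Fe a b := fun hr =>
      tree_sep hAcyc (hsub he) hab (reach_mono hFeT hr)
    set A := comp ends Fe a with hA
    set B := comp ends Fe b with hB
    have hAFe : A ⊆ Fe := comp_subset
    have hBFe : B ⊆ Fe := comp_subset
    have hreach_of_memA : ∀ f ∈ A, ∀ z ∈ ends f, Reach ends Fe a z := by
      intro f hf z hz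
      obtain ⟨hfFe, z', hz', hrz'⟩ := Finset.mem_filter.1 hf
      by_cases hzz : z' = z
      · exact hzz ▸ hrz'
      · exact hrz'.tail ⟨f, hfFe, (Sym2.mem_and_mem_iff hzz).1 ⟨hz', hz⟩⟩
    have hreach_of_memB : ∀ f ∈ B, ∀ z ∈ ends f, Reach ends Fe b z := by
      intro f hf z hz
      obtain ⟨hfFe, z', hz', hrz'⟩ := Finset.mem_filter.1 hf
      by_cases hzz : z' = z
      · exact hzz ▸ hrz'
      · exact hrz'.tail ⟨f, hfFe, (Sym2.mem_and_mem_iff hzz).1 ⟨hz', hz⟩⟩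
    have hABdisj : Disjoint A B := by
      rw [Finset.disjoint_left]
      intro f hfA hfB
      obtain ⟨z, z2, hz⟩ := sym2_cases (ends f)
      have h1 : Reach ends Fe a z := hreach_of_memA f hfA z (hz ▸ Sym2.mem_mk_left _ _)
      have h2 : Reach ends Fe b z := hreach_of_memB f hfB z (hz ▸ Sym2.mem_mk_left _ _)
      exact hnr (h1.trans (reach_symm h2))
    have hsplit : Fe ⊆ A ∪ B := by
      intro f hf
      obtain ⟨x, y, hxy⟩ := sym2_cases (ends f)
      have hxS : x ∈ support ends F' :=
        mem_support_of (Finset.erase_subset _ _ hf) (hxy ▸ Sym2.mem_mk_left _ _)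
      have haS : a ∈ support ends F' := mem_support_of he (hab ▸ Sym2.mem_mk_left _ _)
      have hr : Reach ends F' x a := hconn x hxS a haS
      rcases reach_erase_split he hab hr with h' | h'
      · exact Finset.mem_union_left _
          (Finset.mem_filter.2 ⟨hf, x, hxy ▸ Sym2.mem_mk_left _ _, reach_symm h'⟩)
      · exact Finset.mem_union_right _
          (Finset.mem_filter.2 ⟨hf, x, hxy ▸ Sym2.mem_mk_left _ _, reach_symm h'⟩)
    have hFeAB : Fe = A ∪ B :=
      Finset.Subset.antisymm hsplit (Finset.union_subset hAFe hBFe)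
    have heFe : e ∉ Fe := Finset.notMem_erase _ _
    have hcardF : F'.card = A.card + B.card + 1 := by
      have h1 : Fe.card = F'.card - 1 := Finset.card_erase_of_mem he
      have h2 : Fe.card = A.card + B.card := by
        rw [hFeAB, Finset.card_union_of_disjoint hABdisj]
      have h3 : 1 ≤ F'.card := Finset.card_pos.2 ⟨e, he⟩
      omega
    -- supports of the two sides (allowing empty components)
    have hsuppcard : ∀ (w : V) (C : Finset E), C = comp ends Fe w →
        (support ends C ∪ {w}).card = C.card + 1 := by
      intro w C hC
      rcases Finset.eq_empty_or_nonempty C with hCe | hCne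
      · rw [hCe, support_empty, Finset.empty_union, Finset.card_singleton]
        simp
      · have hwS : w ∈ support ends C := by
          obtain ⟨f, hf⟩ := hCne
          have hf' := hf
          rw [hC] at hf'
          obtain ⟨hfFe, z, hz, hrz⟩ := Finset.mem_filter.1 hf'
          by_cases hzw : z = w
          · exact mem_support_of hf (hzw ▸ hz)
          · have h2 : Reach ends (comp ends Fe w) w z := reach_comp hrz
            rw [← hC] at h2
            exact reach_left_mem_support h2 (Ne.symm hzw)
        have hCcard : C.card ≤ n := by
          have h1 : C ⊆ Fe := hC ▸ comp_subset
          have h2 : C.card ≤ Fe.card := Finset.card_le_card h1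
          have h3 : Fe.card = F'.card - 1 := Finset.card_erase_of_mem he
          have h4 : 1 ≤ F'.card := Finset.card_pos.2 ⟨e, he⟩
          omega
        have := ih C ((hC ▸ comp_subset : C ⊆ Fe).trans
          ((Finset.erase_subset _ _).trans hsub)) hCcard (hC ▸ comp_connectedOn) hCne
        rw [Finset.union_eq_left.2 (Finset.singleton_subset_iff.2 hwS), this]
    have hcardA := hsuppcard a A hA
    have hcardB := hsuppcard b B hB
    have hdisjS : Disjoint (support ends A ∪ {a}) (support ends B ∪ {b}) := by
      rw [Finset.disjoint_left]
      intro x hx hy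
      rcases Finset.mem_union.1 hx with hx' | hx' <;> rcases Finset.mem_union.1 hy with hy' | hy'
      · exact hnr ((mem_comp_support hx').trans (reach_symm (mem_comp_support hy')))
      · rw [Finset.mem_singleton] at hy'
        subst hy'
        exact hnr (mem_comp_support hx')
      · rw [Finset.mem_singleton] at hx'
        subst hx'
        exact hnr (reach_symm (mem_comp_support hy'))
      · rw [Finset.mem_singleton] at hx' hy'
        exact hanb (hx' ▸ hy' ▸ rfl)
    have hsuppF : support ends F' = (support ends A ∪ {a}) ∪ (support ends B ∪ {b}) := by
      apply Finset.Subset.antisymm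
      · intro x hx
        obtain ⟨f, hf, hxf⟩ := mem_support_iff.1 hx
        by_cases hfe : f = e
        · subst hfe
          rw [hab, Sym2.mem_iff] at hxf
          rcases hxf with rfl | rfl
          · exact Finset.mem_union_left _ (Finset.mem_union_right _ (Finset.mem_singleton_self _))
          · exact Finset.mem_union_right _ (Finset.mem_union_right _ (Finset.mem_singleton_self _))
        · have hfFe : f ∈ Fe := Finset.mem_erase.2 ⟨hfe, hf⟩
          rcases Finset.mem_union.1 (hsplit hfFe) with h' | h'
          · exact Finset.mem_union_left _ (Finset.mem_union_left _ (mem_support_of h' hxf))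
          · exact Finset.mem_union_right _ (Finset.mem_union_left _ (mem_support_of h' hxf))
      · intro x hx
        have haS : a ∈ support ends F' := mem_support_of he (hab ▸ Sym2.mem_mk_left _ _)
        have hbS : b ∈ support ends F' := mem_support_of he (hab ▸ Sym2.mem_mk_right _ _)
        have hAF : A ⊆ F' := hAFe.trans (Finset.erase_subset _ _)
        have hBF : B ⊆ F' := hBFe.trans (Finset.erase_subset _ _)
        rcases Finset.mem_union.1 hx with h' | h' <;> rcases Finset.mem_union.1 h' with h'' | h''
        · exact support_mono hAF h''
        · rw [Finset.mem_singleton] at h''; exact h'' ▸ haS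
        · exact support_mono hBF h''
        · rw [Finset.mem_singleton] at h''; exact h'' ▸ hbS
    rw [hsuppF, Finset.card_union_of_disjoint hdisjS, hcardA, hcardB]
    omega

end Tree


section CircuitLemmas
variable {ends : E → Sym2 V} {Tset : Finset E}

lemma edge_mem_of_degree_le {S F : Finset E} (hSF : S ⊆ F) {v : V}
    (hdeg : degree ends F v ≤ degree ends S v) {e : E} (he : e ∈ F) (hv : v ∈ ends e) :
    e ∈ S := by
  by_contra heS
  have hS' : S ⊆ F.erase e := fun f hf => Finset.mem_erase.2 ⟨fun h => heS (h ▸ hf), hSF hf⟩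
  have h1 : degree ends S v ≤ degree ends (F.erase e) v := degree_mono hS' v
  have h2 := degree_erase_add (ends := ends) he v
  have h3 : 0 < ctb ends v e := ctb_pos_iff.2 hv
  omega

lemma subcircuit_eq {C C₀ : Finset E} (hC : IsCircuit ends C) (hsub : C₀ ⊆ C)
    (hC₀ : IsCircuit ends C₀) : C₀ = C := by
  obtain ⟨hCne, hCconn, hCdeg⟩ := hC
  obtain ⟨hC₀ne, hC₀conn, hC₀deg⟩ := hC₀
  have hclosed : ∀ e ∈ C, ∀ a b : V, ends e = s(a, b) →
      a ∈ support ends C₀ → b ∈ support ends C₀ := by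
    intro e he a b hab ha
    have haC : a ∈ support ends C := support_mono hsub ha
    have hdege : degree ends C a ≤ degree ends C₀ a := by
      rw [hCdeg a haC, hC₀deg a ha]
    have heC₀ : e ∈ C₀ := edge_mem_of_degree_le hsub hdege he (hab ▸ Sym2.mem_mk_left _ _)
    exact mem_support_of heC₀ (hab ▸ Sym2.mem_mk_right _ _)
  have hmem : ∀ e ∈ C, e ∈ C₀ := by
    intro e he
    obtain ⟨z, z2, hz⟩ := sym2_cases (ends e)
    obtain ⟨f, hf⟩ := hC₀ne
    obtain ⟨z₀, z₀2, hz₀⟩ := sym2_cases (ends f)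
    have hz₀S : z₀ ∈ support ends C₀ := mem_support_of hf (hz₀ ▸ Sym2.mem_mk_left _ _)
    have hzS : z ∈ support ends C := mem_support_of he (hz ▸ Sym2.mem_mk_left _ _)
    have hr : Reach ends C z₀ z := hCconn z₀ (support_mono hsub hz₀S) z hzS
    have hzC₀ : z ∈ support ends C₀ :=
      reach_closed {y | y ∈ support ends C₀} hz₀S
        (fun e he a b hab ha => hclosed e he a b hab ha) hr
    have hdege : degree ends C z ≤ degree ends C₀ z := by
      rw [hCdeg z hzS, hC₀deg z hzC₀]
    exact edge_mem_of_degree_le hsub hdege he (hz ▸ Sym2.mem_mk_left _ _)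
  exact Finset.Subset.antisymm hsub hmem

lemma circuit_minus_edge (hAcyc : ∀ C ⊆ Tset, ¬ IsCircuit ends C) {C : Finset E} {x : E}
    {p q : V} (hC : IsCircuit ends C) (hx : x ∈ C) (hpq : ends x = s(p, q)) (hne : p ≠ q)
    (hsub : C.erase x ⊆ Tset) : IsPath ends (C.erase x) p q := by
  obtain ⟨hCne, hCconn, hCdeg⟩ := hC
  have hdiag : ¬ (ends x).IsDiag := by rw [hpq, Sym2.mk_isDiag_iff]; exact hne
  have hp : p ∈ support ends C := mem_support_of hx (hpq ▸ Sym2.mem_mk_left _ _)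
  have hq : q ∈ support ends C := mem_support_of hx (hpq ▸ Sym2.mem_mk_right _ _)
  have hdegp : degree ends (C.erase x) p = 1 := by
    have h1 := degree_erase_add (ends := ends) hx p
    rw [ctb_eq_one (hpq ▸ Sym2.mem_mk_left _ _) hdiag, hCdeg p hp] at h1
    omega
  have hdegq : degree ends (C.erase x) q = 1 := by
    have h1 := degree_erase_add (ends := ends) hx q
    rw [ctb_eq_one (hpq ▸ Sym2.mem_mk_right _ _) hdiag, hCdeg q hq] at h1
    omega
  have hdegint : ∀ w ∈ support ends (C.erase x), w ≠ p → w ≠ q →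
      degree ends (C.erase x) w = 2 := by
    intro w hw hwp hwq
    have hwx : w ∉ ends x := by rw [hpq, Sym2.mem_iff]; tauto
    have h1 := degree_erase_add (ends := ends) hx w
    rw [ctb_eq_zero hwx] at h1
    rw [hCdeg w (support_mono (Finset.erase_subset _ _) hw)] at h1
    omega
  have hpS : p ∈ support ends (C.erase x) := mem_support_iff_degree_pos.2 (by omega)
  have hqS : q ∈ support ends (C.erase x) := mem_support_iff_degree_pos.2 (by omega)
  have hkey : ∀ z ∈ support ends (C.erase x),
      Reach ends (C.erase x) z p ∨ Reach ends (C.erase x) z q := by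
    intro z hz
    by_contra hcon
    push_neg at hcon
    obtain ⟨hcp, hcq⟩ := hcon
    set K := comp ends (C.erase x) z with hK
    have hKne : K.Nonempty := by
      obtain ⟨f, hf, hzf⟩ := mem_support_iff.1 hz
      exact ⟨f, Finset.mem_filter.2 ⟨hf, z, hzf, Relation.ReflTransGen.refl⟩⟩
    have hKdeg : ∀ y ∈ support ends K, degree ends K y = 2 := by
      intro y hy
      have hry : Reach ends (C.erase x) z y := mem_comp_support hy
      have hyp : y ≠ p := fun h => hcp (h ▸ hry)
      have hyq : y ≠ q := fun h => hcq (h ▸ hry)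
      have hyS : y ∈ support ends (C.erase x) := support_mono comp_subset hy
      rw [comp_degree hry]
      exact hdegint y hyS hyp hyq
    exact hAcyc K (comp_subset.trans hsub) ⟨hKne, comp_connectedOn, hKdeg⟩
  have hpq_reach : Reach ends (C.erase x) p q := by
    have hodd : Odd (degree ends (C.erase x) p) := by rw [hdegp]; exact odd_one
    obtain ⟨z', hz'ne, hrz', hodd'⟩ := odd_pair hodd
    have hz'S : z' ∈ support ends (C.erase x) :=
      reach_right_mem_support hrz' (Ne.symm hz'ne)
    by_cases hz'q : z' = q
    · exact hz'q ▸ hrz'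
    by_cases hz'p : z' = p
    · exact absurd hz'p hz'ne
    · exfalso
      rw [hdegint z' hz'S hz'p hz'q] at hodd'
      rcases hodd' with ⟨k, hk⟩
      omega
  have hconn : ConnectedOn ends (C.erase x) := by
    intro z₁ h₁ z₂ h₂
    have g₁ : Reach ends (C.erase x) z₁ p := by
      rcases hkey z₁ h₁ with h | h
      · exact h
      · exact h.trans (reach_symm hpq_reach)
    have g₂ : Reach ends (C.erase x) z₂ p := by
      rcases hkey z₂ h₂ with h | h
      · exact h
      · exact h.trans (reach_symm hpq_reach)
    exact g₁.trans (reach_symm g₂)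
  refine ⟨?_, hconn, hne, hpS, hqS, hdegp, hdegq, hdegint⟩
  obtain ⟨f, hf, _⟩ := mem_support_iff.1 hpS
  exact ⟨f, hf⟩

lemma reach_avoid_mono {F G : Finset E} {z a b : V} (h : F ⊆ G)
    (hr : ReachAvoid ends F z a b) : ReachAvoid ends G z a b :=
  Relation.ReflTransGen.mono (fun x y ⟨hx, hy, e, he, hxy⟩ => ⟨hx, hy, e, h he, hxy⟩) _ _ hr

lemma reach_avoid_symm {F : Finset E} {z a b : V} (hr : ReachAvoid ends F z a b) :
    ReachAvoid ends F z b a := by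
  refine @Std.Symm.symm _ _ (@Relation.ReflTransGen.stdSymm _ _ ⟨?_⟩) _ _ hr
  rintro x y ⟨hx, hy, e, he, hxy⟩
  exact ⟨hy, hx, e, he, hxy.trans Sym2.eq_swap⟩

lemma reach_to_avoid {F : Finset E} {z a b : V} (h : Reach ends F a b)
    (hz : ∀ e ∈ F, z ∉ ends e) (ha : a ≠ z) : ReachAvoid ends F z a b := by
  induction h with
  | refl => exact Relation.ReflTransGen.refl
  | tail _ step ih =>
    obtain ⟨e, he, hcd⟩ := step
    rename_i c d _
    have hc : c ≠ z := fun h' => hz e he (h' ▸ hcd ▸ Sym2.mem_mk_left _ _)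
    have hd : d ≠ z := fun h' => hz e he (h' ▸ hcd ▸ Sym2.mem_mk_right _ _)
    exact ih.tail ⟨hc, hd, e, he, hcd⟩

lemma circuit_avoid {C : Finset E} (hC : IsCircuit ends C) {z a b : V}
    (ha : a ∈ support ends C) (hb : b ∈ support ends C) (haz : a ≠ z) (hbz : b ≠ z) :
    ReachAvoid ends C z a b := by
  by_cases hzS : z ∈ support ends C
  · obtain ⟨hCne, hCconn, hCdeg⟩ := id hC
    have hdegz : degree ends C z = 2 := hCdeg z hzS
    obtain ⟨g₁, hg₁, hzg₁⟩ := mem_support_iff.1 hzS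
    by_cases hd₁ : (ends g₁).IsDiag
    · -- loop at z : C = {g₁}, contradiction with a ∈ supp, a ≠ z
      exfalso
      obtain ⟨w, hw⟩ : ∃ w, Sym2.diag w = ends g₁ := ⟨_, Sym2.diag_diagElem hd₁⟩
      have hwz : w = z := by
        rw [← hw, Sym2.diag, Sym2.mem_iff] at hzg₁; tauto
      rw [hwz] at hw
      have h1 := degree_erase_add (ends := ends) hg₁ z
      rw [ctb_eq_two_of_diag hw.symm, hdegz] at h1
      have h2 : degree ends (C.erase g₁) z = 0 := by omega
      have hnoz : ∀ f ∈ C.erase g₁, z ∉ ends f := by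
        intro f hf hzf
        have : z ∈ support ends (C.erase g₁) := mem_support_of hf hzf
        rw [mem_support_iff_degree_pos, h2] at this
        omega
      have hdeq : ∀ y ∈ support ends (C.erase g₁),
          degree ends (C.erase g₁) y = degree ends C y := by
        intro y hy
        have hyz : y ≠ z := by
          intro h'
          obtain ⟨f, hf, hyf⟩ := mem_support_iff.1 hy
          exact hnoz f hf (h' ▸ hyf)
        have h3 := degree_erase_add (ends := ends) hg₁ y
        have h4 : y ∉ ends g₁ := by
          rw [← hw, Sym2.diag, Sym2.mem_iff]
          tauto
        rw [ctb_eq_zero h4] at h3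
        omega
      -- the rest of C would be a strictly smaller subcircuit
      have hrest : C.erase g₁ = ∅ := by
        by_contra hne'
        obtain ⟨f, hf⟩ := Finset.nonempty_iff_ne_empty.2 hne'
        obtain ⟨y, y2, hy⟩ := sym2_cases (ends f)
        set K := comp ends (C.erase g₁) y with hK
        have hKne : K.Nonempty :=
          ⟨f, Finset.mem_filter.2 ⟨hf, y, hy ▸ Sym2.mem_mk_left _ _, Relation.ReflTransGen.refl⟩⟩
        have hKdeg : ∀ y' ∈ support ends K, degree ends K y' = 2 := by
          intro y' hy'
          have hry' : Reach ends (C.erase g₁) y y' := mem_comp_support hy'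
          have hy'S : y' ∈ support ends (C.erase g₁) := support_mono comp_subset hy'
          rw [comp_degree hry', hdeq y' hy'S]
          exact hCdeg y' (support_mono (Finset.erase_subset _ _) hy'S)
        have hKC : K = C := subcircuit_eq ⟨hCne, hCconn, hCdeg⟩
          (comp_subset.trans (Finset.erase_subset _ _)) ⟨hKne, comp_connectedOn, hKdeg⟩
        have : g₁ ∈ K := hKC ▸ hg₁
        exact Finset.notMem_erase g₁ C (comp_subset this)
      have haC : a ∈ support ends C := ha
      obtain ⟨f, hf, haf⟩ := mem_support_iff.1 haC
      by_cases hfg : f = g₁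
      · subst hfg
        rw [← hw, Sym2.diag, Sym2.mem_iff] at haf
        rcases haf with h' | h' <;> exact haz h'
      · have : f ∈ C.erase g₁ := Finset.mem_erase.2 ⟨hfg, hf⟩
        rw [hrest] at this
        exact absurd this (Finset.notMem_empty f)
    · -- two distinct non-loop edges g₁ g₂ at z
      obtain ⟨c₁, hc₁⟩ := Sym2.mem_iff_exists.1 hzg₁
      have hc₁z : c₁ ≠ z := by
        intro h'
        rw [h'] at hc₁
        exact hd₁ (hc₁ ▸ Sym2.diag_isDiag z)
      have h1 := degree_erase_add (ends := ends) hg₁ z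
      rw [ctb_eq_one hzg₁ hd₁, hdegz] at h1
      have h2 : degree ends (C.erase g₁) z = 1 := by omega
      have hz2 : z ∈ support ends (C.erase g₁) := mem_support_iff_degree_pos.2 (by omega)
      obtain ⟨g₂, hg₂, hzg₂⟩ := mem_support_iff.1 hz2
      have hd₂ : ¬ (ends g₂).IsDiag := by
        intro hd'
        obtain ⟨w, hw⟩ : ∃ w, Sym2.diag w = ends g₂ := ⟨_, Sym2.diag_diagElem hd'⟩
        have hwz : w = z := by rw [← hw, Sym2.diag, Sym2.mem_iff] at hzg₂; tauto
        rw [hwz] at hw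
        have h3 := degree_erase_add (ends := ends) hg₂ z
        rw [ctb_eq_two_of_diag hw.symm, h2] at h3
        omega
      obtain ⟨c₂, hc₂⟩ := Sym2.mem_iff_exists.1 hzg₂
      have hc₂z : c₂ ≠ z := by
        intro h'
        rw [h'] at hc₂
        exact hd₂ (hc₂ ▸ Sym2.diag_isDiag z)
      have hg₂C : g₂ ∈ C := Finset.mem_erase.1 hg₂ |>.2
      have hg₁₂ : g₂ ≠ g₁ := Finset.mem_erase.1 hg₂ |>.1
      set C'' := (C.erase g₁).erase g₂ with hC''
      have hzero : degree ends C'' z = 0 := by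
        have h3 := degree_erase_add (ends := ends) hg₂ z
        rw [← hC''] at h3
        rw [ctb_eq_one hzg₂ hd₂, h2] at h3
        omega
      have hnoz : ∀ f ∈ C'', z ∉ ends f := by
        intro f hf hzf
        have : z ∈ support ends C'' := mem_support_of hf hzf
        rw [mem_support_iff_degree_pos, hzero] at this
        omega
      have hC''C : C'' ⊆ C := (Finset.erase_subset _ _).trans (Finset.erase_subset _ _)
      have hdeq : ∀ y, y ≠ c₁ → y ≠ c₂ → y ∈ support ends C'' →
          degree ends C'' y = degree ends C y := by
        intro y hy₁ hy₂ hyS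
        have hyz : y ≠ z := by
          intro h'
          obtain ⟨f, hf, hyf⟩ := mem_support_iff.1 hyS
          exact hnoz f hf (h' ▸ hyf)
        have hyg₁ : y ∉ ends g₁ := by rw [hc₁, Sym2.mem_iff]; tauto
        have hyg₂ : y ∉ ends g₂ := by rw [hc₂, Sym2.mem_iff]; tauto
        have h3 := degree_erase_add (ends := ends) hg₁ y
        have h4 := degree_erase_add (ends := ends) hg₂ y
        rw [← hC''] at h4
        rw [ctb_eq_zero hyg₁] at h3
        rw [ctb_eq_zero hyg₂] at h4
        omega
      -- every vertex of C'' reaches c₁ or c₂ inside C''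
      have hkey : ∀ y ∈ support ends C'',
          Reach ends C'' y c₁ ∨ Reach ends C'' y c₂ := by
        intro y hy
        by_cases hyc₁ : y = c₁
        · exact Or.inl (hyc₁ ▸ Relation.ReflTransGen.refl)
        by_cases hyc₂ : y = c₂
        · exact Or.inr (hyc₂ ▸ Relation.ReflTransGen.refl)
        by_contra hcon
        push_neg at hcon
        obtain ⟨hcp, hcq⟩ := hcon
        set K := comp ends C'' y with hK
        have hKne : K.Nonempty := by
          obtain ⟨f, hf, hyf⟩ := mem_support_iff.1 hy
          exact ⟨f, Finset.mem_filter.2 ⟨hf, y, hyf, Relation.ReflTransGen.refl⟩⟩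
        have hKdeg : ∀ y' ∈ support ends K, degree ends K y' = 2 := by
          intro y' hy'
          have hry' : Reach ends C'' y y' := mem_comp_support hy'
          have hy'c₁ : y' ≠ c₁ := fun h' => hcp (h' ▸ hry')
          have hy'c₂ : y' ≠ c₂ := fun h' => hcq (h' ▸ hry')
          have hy'S : y' ∈ support ends C'' := support_mono comp_subset hy'
          rw [comp_degree hry', hdeq y' hy'c₁ hy'c₂ hy'S]
          exact hCdeg y' (support_mono hC''C hy'S)
        have hKC : K = C := subcircuit_eq ⟨hCne, hCconn, hCdeg⟩
          (comp_subset.trans hC''C) ⟨hKne, comp_connectedOn, hKdeg⟩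
        have hg1K : g₁ ∈ K := hKC ▸ hg₁
        have hg1C'' : g₁ ∈ C'' := comp_subset hg1K
        exact Finset.notMem_erase g₁ C (Finset.mem_of_mem_erase hg1C'')
      -- classify vertices of C other than z
      have hsuppC : ∀ y ∈ support ends C, y ≠ z →
          (y = c₁ ∨ y = c₂ ∨ y ∈ support ends C'') := by
        intro y hy hyz
        obtain ⟨f, hf, hyf⟩ := mem_support_iff.1 hy
        by_cases hf₁ : f = g₁
        · subst hf₁
          rw [hc₁, Sym2.mem_iff] at hyf
          rcases hyf with h' | h'
          · exact absurd h' hyz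
          · exact Or.inl h'
        by_cases hf₂ : f = g₂
        · subst hf₂
          rw [hc₂, Sym2.mem_iff] at hyf
          rcases hyf with h' | h'
          · exact absurd h' hyz
          · exact Or.inr (Or.inl h')
        · exact Or.inr (Or.inr (mem_support_of
            (Finset.mem_erase.2 ⟨hf₂, Finset.mem_erase.2 ⟨hf₁, hf⟩⟩) hyf))
      have hdc₁ : degree ends C c₁ = 2 :=
        hCdeg c₁ (mem_support_of hg₁ (hc₁ ▸ Sym2.mem_mk_right _ _))
      have e1 := degree_erase_add (ends := ends) hg₁ c₁
      have e2 := degree_erase_add (ends := ends) hg₂ c₁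
      rw [← hC''] at e2
      rw [ctb_eq_one (hc₁ ▸ Sym2.mem_mk_right _ _) hd₁] at e1
      by_cases hcc : c₁ = c₂
      · -- digon case : C'' is empty and the only non-z vertex is c₁
        have hcg₂ : c₁ ∈ ends g₂ := by rw [hc₂, Sym2.mem_iff]; exact Or.inr hcc
        rw [ctb_eq_one hcg₂ hd₂] at e2
        have hdegC''c : degree ends C'' c₁ = 0 := by omega
        have hnoc : ∀ f ∈ C'', c₁ ∉ ends f := by
          intro f hf hcf
          have : c₁ ∈ support ends C'' := mem_support_of hf hcf
          rw [mem_support_iff_degree_pos, hdegC''c] at this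
          omega
        have hC''empty : C'' = ∅ := by
          by_contra hne'
          obtain ⟨f, hf⟩ := Finset.nonempty_iff_ne_empty.2 hne'
          obtain ⟨y, y2, hy⟩ := sym2_cases (ends f)
          set K := comp ends C'' y with hK
          have hKne : K.Nonempty :=
            ⟨f, Finset.mem_filter.2 ⟨hf, y, hy ▸ Sym2.mem_mk_left _ _, Relation.ReflTransGen.refl⟩⟩
          have hKdeg : ∀ y' ∈ support ends K, degree ends K y' = 2 := by
            intro y' hy'
            have hry' : Reach ends C'' y y' := mem_comp_support hy'
            have hy'S : y' ∈ support ends C'' := support_mono comp_subset hy'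
            have hy'c₁ : y' ≠ c₁ := by
              intro h'
              obtain ⟨f', hf', hyf'⟩ := mem_support_iff.1 hy'S
              exact hnoc f' hf' (h' ▸ hyf')
            have hy'c₂ : y' ≠ c₂ := by rw [← hcc]; exact hy'c₁
            rw [comp_degree hry', hdeq y' hy'c₁ hy'c₂ hy'S]
            exact hCdeg y' (support_mono hC''C hy'S)
          have hKC : K = C := subcircuit_eq ⟨hCne, hCconn, hCdeg⟩
            (comp_subset.trans hC''C) ⟨hKne, comp_connectedOn, hKdeg⟩
          have hg1K : g₁ ∈ K := hKC ▸ hg₁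
          have hg1C'' : g₁ ∈ C'' := comp_subset hg1K
          exact Finset.notMem_erase g₁ C (Finset.mem_of_mem_erase hg1C'')
        have ha' := hsuppC a ha haz
        have hb' := hsuppC b hb hbz
        rw [hC''empty, support_empty] at ha' hb'
        have ha2 : a = c₁ := by
          rcases ha' with h' | h' | h'
          · exact h'
          · exact hcc ▸ h'
          · exact absurd h' (Finset.notMem_empty a)
        have hb2 : b = c₁ := by
          rcases hb' with h' | h' | h'
          · exact h'
          · exact hcc ▸ h'
          · exact absurd h' (Finset.notMem_empty b)
        rw [ha2, hb2]
        exact Relation.ReflTransGen.refl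
      · -- c₁ ≠ c₂ : both have degree 1 in C'' and are joined inside C''
        have hcg₂ : c₁ ∉ ends g₂ := by
          rw [hc₂, Sym2.mem_iff]
          push_neg
          exact ⟨fun h' => hc₁z h', hcc⟩
        rw [ctb_eq_zero hcg₂] at e2
        have hdegC''c₁ : degree ends C'' c₁ = 1 := by omega
        have hdc₂ : degree ends C c₂ = 2 :=
          hCdeg c₂ (mem_support_of hg₂C (hc₂ ▸ Sym2.mem_mk_right _ _))
        have e3 := degree_erase_add (ends := ends) hg₁ c₂
        have e4 := degree_erase_add (ends := ends) hg₂ c₂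
        rw [← hC''] at e4
        have hcg₁ : c₂ ∉ ends g₁ := by
          rw [hc₁, Sym2.mem_iff]
          push_neg
          exact ⟨fun h' => hc₂z h', fun h' => hcc h'.symm⟩
        rw [ctb_eq_zero hcg₁] at e3
        rw [ctb_eq_one (hc₂ ▸ Sym2.mem_mk_right _ _) hd₂] at e4
        have hdegC''c₂ : degree ends C'' c₂ = 1 := by omega
        have hc₁S : c₁ ∈ support ends C'' := mem_support_iff_degree_pos.2 (by omega)
        have hc₂S : c₂ ∈ support ends C'' := mem_support_iff_degree_pos.2 (by omega)
        have hbridge : Reach ends C'' c₁ c₂ := by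
          have hodd : Odd (degree ends C'' c₁) := by rw [hdegC''c₁]; exact odd_one
          obtain ⟨y, hyne, hry, hoddy⟩ := odd_pair hodd
          have hyS : y ∈ support ends C'' := reach_right_mem_support hry (Ne.symm hyne)
          by_cases hyc₂ : y = c₂
          · exact hyc₂ ▸ hry
          · exfalso
            rw [hdeq y hyne hyc₂ hyS,
              hCdeg y (support_mono hC''C hyS)] at hoddy
            rcases hoddy with ⟨k, hk⟩
            omega
        have hreachC'' : ∀ y ∈ support ends C, y ≠ z → Reach ends C'' y c₁ := by
          intro y hy hyz
          have hy' : y ∈ support ends C'' := by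
            rcases hsuppC y hy hyz with h' | h' | h'
            · exact h' ▸ hc₁S
            · exact h' ▸ hc₂S
            · exact h'
          rcases hkey y hy' with h' | h'
          · exact h'
          · exact h'.trans (reach_symm hbridge)
        have hreach : Reach ends C'' a b :=
          (hreachC'' a ha haz).trans (reach_symm (hreachC'' b hb hbz))
        exact reach_avoid_mono hC''C (reach_to_avoid hreach hnoz haz)
  · -- z not on the circuit at all
    have hz : ∀ e ∈ C, z ∉ ends e := fun e he hze => hzS (mem_support_of he hze)
    exact reach_to_avoid (hC.2.1 a ha b hb) hz haz

end CircuitLemmas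


section Ear
variable {ends : E → Sym2 V}

lemma two_conn_avoid {D : Finset E} (hD : TwoConnectedOn ends D) {z a b : V}
    (ha : a ∈ support ends D) (hb : b ∈ support ends D) (haz : a ≠ z) (hbz : b ≠ z) :
    ReachAvoid ends D z a b := by
  by_contra hcon
  exact hD.2 z ⟨a, ha, b, hb, haz, hbz, hD.1 a ha b hb, hcon⟩

lemma connectedOn_union {C D : Finset E} {w : V} (hC : ConnectedOn ends C)
    (hD : ConnectedOn ends D) (hwC : w ∈ support ends C) (hwD : w ∈ support ends D) :
    ConnectedOn ends (C ∪ D) := by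
  have key : ∀ x ∈ support ends (C ∪ D), Reach ends (C ∪ D) x w := by
    intro x hx
    rw [support_union] at hx
    rcases Finset.mem_union.1 hx with hx' | hx'
    · exact reach_mono Finset.subset_union_left (hC x hx' w hwC)
    · exact reach_mono Finset.subset_union_right (hD x hx' w hwD)
  intro x hx y hy
  exact (key x hx).trans (reach_symm (key y hy))

lemma ear_two_connected {C D : Finset E} (hD2 : TwoConnectedOn ends D)
    (hC : IsCircuit ends C) {u v : V} (huC : u ∈ support ends C) (hvC : v ∈ support ends C)
    (huD : u ∈ support ends D) (hvD : v ∈ support ends D) (huv : u ≠ v) :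
    TwoConnectedOn ends (C ∪ D) := by
  have hconn : ConnectedOn ends (C ∪ D) := connectedOn_union hC.2.1 hD2.1 huC huD
  refine ⟨hconn, ?_⟩
  intro z hcut
  obtain ⟨a, ha, b, hb, haz, hbz, hrab, hnav⟩ := hcut
  apply hnav
  -- pick the hub c ∈ {u, v} with c ≠ z
  have hhub : ∃ c, (c = u ∨ c = v) ∧ c ≠ z := by
    by_cases huz : u = z
    · exact ⟨v, Or.inr rfl, fun h => huv (huz ▸ h ▸ rfl)⟩
    · exact ⟨u, Or.inl rfl, huz⟩
  obtain ⟨c, hcuv, hcz⟩ := hhub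
  have hcC : c ∈ support ends C := by rcases hcuv with rfl | rfl <;> assumption
  have hcD : c ∈ support ends D := by rcases hcuv with rfl | rfl <;> assumption
  have key : ∀ p, p ∈ support ends (C ∪ D) → p ≠ z → ReachAvoid ends (C ∪ D) z p c := by
    intro p hp hpz
    rw [support_union] at hp
    rcases Finset.mem_union.1 hp with hp' | hp'
    · exact reach_avoid_mono Finset.subset_union_left (circuit_avoid hC hp' hcC hpz hcz)
    · exact reach_avoid_mono Finset.subset_union_right (two_conn_avoid hD2 hp' hcD hpz hcz)
  exact (key a ha haz).trans (reach_avoid_symm (key b hb hbz))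

end Ear


section MainLemmas
variable {ends : E → Sym2 V} {sgn : E → Bool} {Cx : E → Finset E} {A : Finset E}

lemma x_not_mem_D
    (hCx : ∀ x : E, sgn x = true → IsCircuit ends (Cx x) ∧
      Cx x ⊆ insert x (Finset.univ.filter fun e => sgn e = false) ∧ x ∈ Cx x)
    (hA : ∀ a ∈ A, sgn a = true) {x : E} (hx : sgn x = true) (hxA : x ∉ A) :
    x ∉ A.biUnion Cx := by
  intro h
  obtain ⟨b, hb, hxb⟩ := Finset.mem_biUnion.1 h
  have := (hCx b (hA b hb)).2.1 hxb
  rcases Finset.mem_insert.1 this with h' | h'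
  · exact hxA (h' ▸ hb)
  · rw [Finset.mem_filter] at h'
    rw [hx] at h'
    simp at h'

lemma reach_to_F
    (hAcyc : ∀ C ⊆ (Finset.univ.filter fun e => sgn e = false), ¬ IsCircuit ends C)
    (hCx : ∀ x : E, sgn x = true → IsCircuit ends (Cx x) ∧
      Cx x ⊆ insert x (Finset.univ.filter fun e => sgn e = false) ∧ x ∈ Cx x)
    (hA : ∀ a ∈ A, sgn a = true) {u v : V}
    (h : Reach ends (A.biUnion Cx) u v) :
    Reach ends ((A.biUnion Cx) ∩ (Finset.univ.filter fun e => sgn e = false)) u v := by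
  induction h with
  | refl => exact Relation.ReflTransGen.refl
  | tail _ step ih =>
    rename_i c d _
    obtain ⟨e, heD, hcd⟩ := step
    obtain ⟨a₀, ha₀A, heCx⟩ := Finset.mem_biUnion.1 heD
    by_cases heT : sgn e = false
    · refine ih.tail ⟨e, ?_, hcd⟩
      exact Finset.mem_inter.2 ⟨heD, Finset.mem_filter.2 ⟨Finset.mem_univ _, heT⟩⟩
    · have hea : e = a₀ := by
        rcases Finset.mem_insert.1 ((hCx a₀ (hA a₀ ha₀A)).2.1 heCx) with h' | h'
        · exact h'
        · rw [Finset.mem_filter] at h'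
          exact absurd h'.2 heT
      subst hea
      by_cases hdg : (ends e).IsDiag
      · have : c = d := by
          rw [hcd, Sym2.mk_isDiag_iff] at hdg
          exact hdg
        exact this ▸ ih
      · have hne : c ≠ d := by
          intro h'
          rw [hcd, h'] at hdg
          exact hdg (Sym2.mk_isDiag_iff.2 rfl)
        have hsubT : (Cx e).erase e ⊆ (Finset.univ.filter fun e => sgn e = false) := by
          intro f hf
          rw [Finset.mem_erase] at hf
          rcases Finset.mem_insert.1 ((hCx e (hA e ha₀A)).2.1 hf.2) with h' | h'
          · exact absurd h' hf.1
          · exact h'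
        have hpath := circuit_minus_edge hAcyc (hCx e (hA e ha₀A)).1
          (hCx e (hA e ha₀A)).2.2 hcd hne hsubT
        have hsubF : (Cx e).erase e ⊆
            (A.biUnion Cx) ∩ (Finset.univ.filter fun e => sgn e = false) := by
          refine Finset.subset_inter ?_ hsubT
          intro f hf
          exact Finset.mem_biUnion.2 ⟨e, ha₀A, (Finset.erase_subset _ _) hf⟩
        refine ih.trans (reach_mono hsubF ?_)
        exact hpath.2.1 c hpath.2.2.2.1 d hpath.2.2.2.2.1

lemma connF
    (hAcyc : ∀ C ⊆ (Finset.univ.filter fun e => sgn e = false), ¬ IsCircuit ends C)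
    (hCx : ∀ x : E, sgn x = true → IsCircuit ends (Cx x) ∧
      Cx x ⊆ insert x (Finset.univ.filter fun e => sgn e = false) ∧ x ∈ Cx x)
    (hA : ∀ a ∈ A, sgn a = true)
    (hconnD : ConnectedOn ends (A.biUnion Cx)) :
    ConnectedOn ends ((A.biUnion Cx) ∩ (Finset.univ.filter fun e => sgn e = false)) := by
  intro u hu v hv
  have hu' := support_mono Finset.inter_subset_left hu
  have hv' := support_mono Finset.inter_subset_left hv
  exact reach_to_F hAcyc hCx hA (hconnD u hu' v hv')

lemma suppF_eq
    (hAcyc : ∀ C ⊆ (Finset.univ.filter fun e => sgn e = false), ¬ IsCircuit ends C)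
    (hCx : ∀ x : E, sgn x = true → IsCircuit ends (Cx x) ∧
      Cx x ⊆ insert x (Finset.univ.filter fun e => sgn e = false) ∧ x ∈ Cx x)
    (hA : ∀ a ∈ A, sgn a = true)
    (hconnD : ConnectedOn ends (A.biUnion Cx))
    {a₀ : E} (ha₀ : a₀ ∈ A) (hd₀ : ¬ (ends a₀).IsDiag) :
    support ends ((A.biUnion Cx) ∩ (Finset.univ.filter fun e => sgn e = false))
      = support ends (A.biUnion Cx) := by
  apply Finset.Subset.antisymm (support_mono Finset.inter_subset_left)
  obtain ⟨p, q, hpq⟩ := sym2_cases (ends a₀)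
  have hne : p ≠ q := by
    intro h'
    rw [hpq, h'] at hd₀
    exact hd₀ (Sym2.mk_isDiag_iff.2 rfl)
  have hsubT : (Cx a₀).erase a₀ ⊆ (Finset.univ.filter fun e => sgn e = false) := by
    intro f hf
    rw [Finset.mem_erase] at hf
    rcases Finset.mem_insert.1 ((hCx a₀ (hA a₀ ha₀)).2.1 hf.2) with h' | h'
    · exact absurd h' hf.1
    · exact h'
  have hpath := circuit_minus_edge hAcyc (hCx a₀ (hA a₀ ha₀)).1
    (hCx a₀ (hA a₀ ha₀)).2.2 hpq hne hsubT
  have hsubF : (Cx a₀).erase a₀ ⊆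
      (A.biUnion Cx) ∩ (Finset.univ.filter fun e => sgn e = false) := by
    refine Finset.subset_inter ?_ hsubT
    intro f hf
    exact Finset.mem_biUnion.2 ⟨a₀, ha₀, (Finset.erase_subset _ _) hf⟩
  have hpF : p ∈ support ends ((A.biUnion Cx) ∩ (Finset.univ.filter fun e => sgn e = false)) :=
    support_mono hsubF hpath.2.2.2.1
  intro w hw
  have hpD : p ∈ support ends (A.biUnion Cx) := support_mono Finset.inter_subset_left hpF
  have hr : Reach ends (A.biUnion Cx) w p := hconnD w hw p hpD
  have hr' := reach_to_F hAcyc hCx hA hr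
  by_cases hwp : w = p
  · exact hwp ▸ hpF
  · exact reach_left_mem_support hr' hwp

lemma Q_path
    (hAcyc : ∀ C ⊆ (Finset.univ.filter fun e => sgn e = false), ¬ IsCircuit ends C)
    (hCx : ∀ x : E, sgn x = true → IsCircuit ends (Cx x) ∧
      Cx x ⊆ insert x (Finset.univ.filter fun e => sgn e = false) ∧ x ∈ Cx x)
    (hA : ∀ a ∈ A, sgn a = true)
    (hconnD : ConnectedOn ends (A.biUnion Cx))
    {x : E} (hx : sgn x = true) (hxA : x ∉ A) (hnl : ¬ (ends x).IsDiag)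
    (hQne : ((A.biUnion Cx) ∩ Cx x).Nonempty) :
    ∃ u v, IsPath ends ((A.biUnion Cx) ∩ Cx x) u v ∧
      u ∈ support ends (A.biUnion Cx) ∧ v ∈ support ends (A.biUnion Cx) ∧
      u ∈ support ends (Cx x) ∧ v ∈ support ends (Cx x) ∧ u ≠ v := by
  obtain ⟨p, q, hpq⟩ := sym2_cases (ends x)
  have hpqne : p ≠ q := by
    intro h'
    rw [hpq, h'] at hnl
    exact hnl (Sym2.mk_isDiag_iff.2 rfl)
  have hsubT : (Cx x).erase x ⊆ (Finset.univ.filter fun e => sgn e = false) := by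
    intro f hf
    rw [Finset.mem_erase] at hf
    rcases Finset.mem_insert.1 ((hCx x hx).2.1 hf.2) with h' | h'
    · exact absurd h' hf.1
    · exact h'
  have hPx := circuit_minus_edge hAcyc (hCx x hx).1 (hCx x hx).2.2 hpq hpqne hsubT
  have hxD : x ∉ A.biUnion Cx := x_not_mem_D hCx hA hx hxA
  have hQeq : (A.biUnion Cx) ∩ Cx x
      = ((A.biUnion Cx) ∩ (Finset.univ.filter fun e => sgn e = false)) ∩ ((Cx x).erase x) := by
    ext f
    simp only [Finset.mem_inter, Finset.mem_erase]
    constructor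
    · rintro ⟨hfD, hfC⟩
      have hfx : f ≠ x := fun h' => hxD (h' ▸ hfD)
      exact ⟨⟨hfD, hsubT (Finset.mem_erase.2 ⟨hfx, hfC⟩)⟩, hfx, hfC⟩
    · rintro ⟨⟨hfD, _⟩, _, hfC⟩
      exact ⟨hfD, hfC⟩
  -- connectivity of Q
  have hQT : (A.biUnion Cx) ∩ Cx x ⊆ (Finset.univ.filter fun e => sgn e = false) := by
    rw [hQeq]
    exact Finset.inter_subset_right.trans hsubT
  have hQconn : ConnectedOn ends ((A.biUnion Cx) ∩ Cx x) := by
    intro u hu v hv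
    rw [hQeq] at hu hv ⊢
    refine subtree_connect hAcyc Finset.inter_subset_right hsubT
      (connF hAcyc hCx hA hconnD) (hPx.2.1) ?_ ?_ ?_ ?_
    · exact support_mono Finset.inter_subset_left hu
    · exact support_mono Finset.inter_subset_right hu
    · exact support_mono Finset.inter_subset_left hv
    · exact support_mono Finset.inter_subset_right hv
  have hQPx : (A.biUnion Cx) ∩ Cx x ⊆ (Cx x).erase x := by
    rw [hQeq]; exact Finset.inter_subset_right
  have hdegle : ∀ w : V, degree ends ((A.biUnion Cx) ∩ Cx x) w ≤ 2 := by
    intro w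
    refine (degree_mono hQPx w).trans ?_
    by_cases hw : w ∈ support ends ((Cx x).erase x)
    · by_cases hwp : w = p
      · rw [hwp, hPx.2.2.2.2.2.1]; omega
      by_cases hwq : w = q
      · rw [hwq, hPx.2.2.2.2.2.2.1]; omega
      · rw [hPx.2.2.2.2.2.2.2 w hw hwp hwq]
    · rw [degree_eq_zero_of_not_mem hw]; omega
  have hcount := tree_count hAcyc (((A.biUnion Cx) ∩ Cx x).card) _ hQT le_rfl hQconn hQne
  have hsum1 : ∑ w ∈ support ends ((A.biUnion Cx) ∩ Cx x),
      degree ends ((A.biUnion Cx) ∩ Cx x) w = 2 * ((A.biUnion Cx) ∩ Cx x).card := by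
    rw [Finset.sum_subset (Finset.subset_univ _)
      (fun w _ hw => degree_eq_zero_of_not_mem hw)]
    exact handshake (ends := ends) _
  set Q := (A.biUnion Cx) ∩ Cx x with hQ
  set S1 := (support ends Q).filter (fun w => degree ends Q w = 1) with hS1
  have hsplit := Finset.sum_filter_add_sum_filter_not (support ends Q)
    (fun w => degree ends Q w = 1) (fun w => degree ends Q w)
  have h1 : ∑ w ∈ S1, degree ends Q w = S1.card := by
    rw [Finset.sum_congr rfl (fun w hw => (Finset.mem_filter.1 hw).2)]
    simp [hS1]
  have h2 : ∑ w ∈ (support ends Q).filter (fun w => ¬ degree ends Q w = 1),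
      degree ends Q w
      = 2 * ((support ends Q).filter (fun w => ¬ degree ends Q w = 1)).card := by
    rw [Finset.sum_congr rfl (fun w hw => ?_), Finset.sum_const, smul_eq_mul, mul_comm]
    obtain ⟨hwS, hwne⟩ := Finset.mem_filter.1 hw
    have := mem_support_iff_degree_pos.1 hwS
    have := hdegle w
    omega
  have hcards := Finset.card_filter_add_card_filter_not
    (s := support ends Q) (p := fun w => degree ends Q w = 1)
  have hS1card : S1.card = 2 := by
    rw [← hS1] at hcards
    rw [h1, h2] at hsplit
    rw [hsum1] at hsplit
    omega
  have h2lt : 1 < S1.card := by omega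
  obtain ⟨u, hu, v, hv, huv⟩ := Finset.one_lt_card.1 h2lt
  have hS1eq : ({u, v} : Finset V) = S1 := by
    refine Finset.eq_of_subset_of_card_le ?_ ?_
    · intro w hw
      rcases Finset.mem_insert.1 hw with rfl | hw'
      · exact hu
      · rw [Finset.mem_singleton] at hw'
        exact hw' ▸ hv
    · rw [hS1card, Finset.card_insert_of_notMem (by simp [huv]), Finset.card_singleton]
  have huS : u ∈ support ends Q := (Finset.mem_filter.1 hu).1
  have hvS : v ∈ support ends Q := (Finset.mem_filter.1 hv).1
  have hpath : IsPath ends Q u v := by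
    refine ⟨hQne, hQconn, huv, huS, hvS, (Finset.mem_filter.1 hu).2,
      (Finset.mem_filter.1 hv).2, ?_⟩
    intro w hw hwu hwv
    have hwle := hdegle w
    have hwpos := mem_support_iff_degree_pos.1 hw
    by_cases hw1 : degree ends Q w = 1
    · exfalso
      have : w ∈ S1 := Finset.mem_filter.2 ⟨hw, hw1⟩
      rw [← hS1eq] at this
      rcases Finset.mem_insert.1 this with rfl | h'
      · exact hwu rfl
      · rw [Finset.mem_singleton] at h'
        exact hwv h'
    · omega
  exact ⟨u, v, hpath, support_mono Finset.inter_subset_left huS,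
    support_mono Finset.inter_subset_left hvS,
    support_mono Finset.inter_subset_right huS,
    support_mono Finset.inter_subset_right hvS, huv⟩

end MainLemmas


section Outside
variable {ends : E → Sym2 V}

lemma reach_empty {a b : V} (h : Reach ends (∅ : Finset E) a b) : a = b := by
  induction h with
  | refl => rfl
  | tail _ step _ =>
    obtain ⟨e, he, _⟩ := step
    exact absurd he (Finset.notMem_empty e)

lemma isPath_symm {P : Finset E} {u v : V} (h : IsPath ends P u v) : IsPath ends P v u := by
  obtain ⟨h1, h2, h3, h4, h5, h6, h7, h8⟩ := h
  exact ⟨h1, h2, h3.symm, h5, h4, h7, h6, fun w hw hwv hwu => h8 w hw hwu hwv⟩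

lemma unique_edge_of_degree_le_one {F : Finset E} {v : V} (hdeg : degree ends F v ≤ 1)
    {e₁ e₂ : E} (h₁ : e₁ ∈ F) (h₂ : e₂ ∈ F) (hv₁ : v ∈ ends e₁) (hv₂ : v ∈ ends e₂) :
    e₁ = e₂ := by
  by_contra hne
  have hsub : ({e₁, e₂} : Finset E) ⊆ F := by
    intro f hf
    rcases Finset.mem_insert.1 hf with rfl | hf'
    · exact h₁
    · rw [Finset.mem_singleton] at hf'
      exact hf' ▸ h₂
  have hle : ∑ e ∈ ({e₁, e₂} : Finset E), ctb ends v e ≤ degree ends F v := by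
    rw [degree_eq_sum_ctb]
    exact Finset.sum_le_sum_of_subset hsub
  rw [Finset.sum_insert (by simpa using hne), Finset.sum_singleton] at hle
  have := ctb_pos_iff.2 hv₁
  have := ctb_pos_iff.2 hv₂
  omega

/-- Out-of-`S` reachability along `Tset` edges. -/
def OutReach (ends : E → Sym2 V) (Tset : Finset E) (S : Finset V) : V → V → Prop :=
  Relation.ReflTransGen fun a b => a ∉ S ∧ b ∉ S ∧ ∃ e ∈ Tset, ends e = s(a, b)

variable {Tset : Finset E} {S : Finset V}

lemma outReach_symm {a b : V} (h : OutReach ends Tset S a b) : OutReach ends Tset S b a := by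
  refine @Std.Symm.symm _ _ (@Relation.ReflTransGen.stdSymm _ _ ⟨?_⟩) _ _ h
  rintro x y ⟨hx, hy, e, he, hxy⟩
  exact ⟨hy, hx, e, he, hxy.trans Sym2.eq_swap⟩

lemma outReach_of_reach {G : Finset E} {a b : V} (hG : G ⊆ Tset)
    (hout : ∀ g ∈ G, ∀ y ∈ ends g, y ∉ S) (h : Reach ends G a b) :
    OutReach ends Tset S a b := by
  induction h with
  | refl => exact Relation.ReflTransGen.refl
  | tail _ step ih =>
    obtain ⟨e, he, hxy⟩ := step
    exact ih.tail ⟨hout e he _ (hxy ▸ Sym2.mem_mk_left _ _),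
      hout e he _ (hxy ▸ Sym2.mem_mk_right _ _), e, hG he, hxy⟩

/-- `y` (outside `S`) attaches to `S` at the vertex `p`. -/
def Att (ends : E → Sym2 V) (Tset : Finset E) (S : Finset V) (y p : V) : Prop :=
  y ∉ S ∧ p ∈ S ∧ ∃ e ∈ Tset, ∃ z, ends e = s(z, p) ∧ z ∉ S ∧ OutReach ends Tset S y z

lemma att_extend {y y' p : V} (h : OutReach ends Tset S y' y) (hy' : y' ∉ S)
    (hatt : Att ends Tset S y p) : Att ends Tset S y' p := by
  obtain ⟨hy, hp, e, he, z, hz, hzS, hor⟩ := hatt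
  exact ⟨hy', hp, e, he, z, hz, hzS, h.trans hor⟩

lemma att_exists (hTconn : ∀ u v : V, Reach ends Tset u v) {w p₀ : V}
    (hw : w ∉ S) (hp₀ : p₀ ∈ S) : ∃ p, Att ends Tset S w p := by
  by_contra hcon
  push_neg at hcon
  have hclosed : ∀ e ∈ Tset, ∀ a b : V, ends e = s(a, b) →
      a ∈ {y : V | y ∉ S ∧ OutReach ends Tset S w y} →
      b ∈ {y : V | y ∉ S ∧ OutReach ends Tset S w y} := by
    intro e he a b hab ha
    obtain ⟨haS, hora⟩ := ha
    by_cases hbS : b ∈ S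
    · exact absurd ⟨hw, hbS, e, he, a, hab, haS, hora⟩ (hcon b)
    · exact ⟨hbS, hora.tail ⟨haS, hbS, e, he, hab⟩⟩
  have hWmem : w ∈ {y : V | y ∉ S ∧ OutReach ends Tset S w y} :=
    ⟨hw, Relation.ReflTransGen.refl⟩
  have := reach_closed {y : V | y ∉ S ∧ OutReach ends Tset S w y} hWmem hclosed (hTconn w p₀)
  exact this.1 hp₀

lemma att_unique (hAcyc : ∀ C ⊆ Tset, ¬ IsCircuit ends C) {F : Finset E}
    (hFT : F ⊆ Tset) (hFconn : ConnectedOn ends F) (hsuppF : support ends F = S)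
    {y p₁ p₂ : V} (h₁ : Att ends Tset S y p₁) (h₂ : Att ends Tset S y p₂) : p₁ = p₂ := by
  obtain ⟨hyS, hp₁, e₁, he₁, z₁, hz₁, hz₁S, hor₁⟩ := h₁
  obtain ⟨-, hp₂, e₂, he₂, z₂, hz₂, hz₂S, hor₂⟩ := h₂
  by_cases hee : e₁ = e₂
  · subst hee
    rw [hz₁, Sym2.eq_iff] at hz₂
    rcases hz₂ with ⟨_, h'⟩ | ⟨h', _⟩
    · exact h'
    · exact absurd (h' ▸ hp₂) hz₁S
  · exfalso
    -- build a z₁ – p₁ connection avoiding e₁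
    have hOT : ∀ {a b : V}, OutReach ends Tset S a b → Reach ends (Tset.erase e₁) a b := by
      intro a b h
      refine Relation.ReflTransGen.mono ?_ _ _ h
      rintro x y' ⟨hx, hy', e, he, hxy⟩
      refine ⟨e, Finset.mem_erase.2 ⟨?_, he⟩, hxy⟩
      intro hcontra
      subst hcontra
      rw [hxy, Sym2.eq_iff] at hz₁
      rcases hz₁ with ⟨_, h'⟩ | ⟨h', _⟩
      · exact hy' (h' ▸ hp₁)
      · exact hx (h' ▸ hp₁)
    have hFsub : F ⊆ Tset.erase e₁ := by
      intro f hf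
      refine Finset.mem_erase.2 ⟨?_, hFT hf⟩
      intro hcontra
      subst hcontra
      have : z₁ ∈ support ends F := mem_support_of hf (hz₁ ▸ Sym2.mem_mk_left _ _)
      rw [hsuppF] at this
      exact hz₁S this
    have hstep2 : Reach ends (Tset.erase e₁) z₂ p₂ :=
      Relation.ReflTransGen.single ⟨e₂, Finset.mem_erase.2 ⟨fun h => hee h.symm, he₂⟩, hz₂⟩
    have hF21 : Reach ends (Tset.erase e₁) p₂ p₁ := by
      refine reach_mono hFsub (hFconn p₂ ?_ p₁ ?_)
      · rw [hsuppF]; exact hp₂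
      · rw [hsuppF]; exact hp₁
    have : Reach ends (Tset.erase e₁) z₁ p₁ :=
      ((hOT (outReach_symm hor₁)).trans (hOT hor₂)).trans (hstep2.trans hF21)
    exact tree_sep hAcyc he₁ hz₁ this

lemma path_avoid_vertex {P : Finset E} {c d s : V} (hP : IsPath ends P c d)
    (hsc : s ≠ c) (hsd : s ≠ d) :
    (∃ f ∈ P, ∃ z, ends f = s(z, s) ∧ z ≠ s ∧
      (z = c ∨ Reach ends (P.filter fun g => s ∉ ends g) c z)) ∨
      Reach ends (P.filter fun g => s ∉ ends g) c d := by
  obtain ⟨hPne, hPconn, hcd, hcS, hdS, hdc1, hdd1, hint⟩ := id hP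
  by_cases hsS : s ∈ support ends P
  swap
  · right
    have hfil : P.filter (fun g => s ∉ ends g) = P := by
      refine Finset.filter_true_of_mem ?_
      intro g hg hs
      exact hsS (mem_support_of hg hs)
    rw [hfil]
    exact hPconn c hcS d hdS
  have hdegs0 : degree ends (P.filter fun g => s ∉ ends g) s = 0 := by
    refine degree_eq_zero_of_not_mem ?_
    intro hmem
    obtain ⟨g, hg, hsg⟩ := mem_support_iff.1 hmem
    exact (Finset.mem_filter.1 hg).2 hsg
  by_cases hadjc : ∃ f ∈ P, s ∈ ends f ∧ c ∈ ends f
  · obtain ⟨f, hf, hsf, hcf⟩ := hadjc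
    exact Or.inl ⟨f, hf, c, (Sym2.mem_and_mem_iff (fun h => hsc h.symm)).1 ⟨hcf, hsf⟩,
      fun h => hsc h.symm, Or.inl rfl⟩
  · have hdegfc : degree ends (P.filter fun g => s ∉ ends g) c = degree ends P c := by
      rw [degree_eq_sum_ctb, degree_eq_sum_ctb]
      refine Finset.sum_subset (Finset.filter_subset _ _) ?_
      intro g hg hng
      rw [Finset.mem_filter] at hng
      push_neg at hng
      have hsg : s ∈ ends g := hng hg
      refine ctb_eq_zero fun hcg => hadjc ⟨g, hg, hsg, hcg⟩
    have hodd : Odd (degree ends (P.filter fun g => s ∉ ends g) c) := by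
      rw [hdegfc, hdc1]; exact odd_one
    obtain ⟨y, hyne, hry, hoddy⟩ := odd_pair hodd
    have hys : y ≠ s := by
      intro h'
      rw [h', hdegs0] at hoddy
      simp at hoddy
    by_cases hadjy : ∃ f ∈ P, s ∈ ends f ∧ y ∈ ends f
    · obtain ⟨f, hf, hsf, hyf⟩ := hadjy
      exact Or.inl ⟨f, hf, y, (Sym2.mem_and_mem_iff hys).1 ⟨hyf, hsf⟩, hys, Or.inr hry⟩
    · have hdegfy : degree ends (P.filter fun g => s ∉ ends g) y = degree ends P y := by
        rw [degree_eq_sum_ctb, degree_eq_sum_ctb]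
        refine Finset.sum_subset (Finset.filter_subset _ _) ?_
        intro g hg hng
        rw [Finset.mem_filter] at hng
        push_neg at hng
        have hsg : s ∈ ends g := hng hg
        refine ctb_eq_zero fun hyg => hadjy ⟨g, hg, hsg, hyg⟩
      have hyS : y ∈ support ends P := by
        refine support_mono (Finset.filter_subset (fun g => s ∉ ends g) P) ?_
        rw [mem_support_iff_degree_pos]
        rcases hoddy with ⟨k, hk⟩
        omega
      by_cases hyd : y = d
      · exact Or.inr (hyd ▸ hry)
      · exfalso
        rw [hdegfy, hint y hyS hyne hyd] at hoddy
        rcases hoddy with ⟨k, hk⟩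
        omega

lemma path_avoid_endpoint {P : Finset E} {c d : V} (hP : IsPath ends P c d)
    (hnl : ∀ f ∈ P, ¬ (ends f).IsDiag) :
    ∃ f ∈ P, ∃ z, ends f = s(z, c) ∧ z ≠ c ∧
      (z = d ∨ Reach ends (P.filter fun g => c ∉ ends g) d z) := by
  obtain ⟨hPne, hPconn, hcd, hcS, hdS, hdc1, hdd1, hint⟩ := id hP
  obtain ⟨f, hf, hcf⟩ := mem_support_iff.1 hcS
  obtain ⟨z, hz⟩ := Sym2.mem_iff_exists.1 hcf
  have hzc : z ≠ c := by
    intro h'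
    exact hnl f hf (by rw [hz, h']; exact Sym2.mk_isDiag_iff.2 rfl)
  have hends : ends f = s(z, c) := hz.trans Sym2.eq_swap
  by_cases hzd : z = d
  · exact ⟨f, hf, z, hends, hzc, Or.inl hzd⟩
  have huniq : ∀ g ∈ P, c ∈ ends g → g = f :=
    fun g hg hcg => unique_edge_of_degree_le_one (le_of_eq hdc1) hg hf hcg hcf
  have hdegc0 : degree ends (P.filter fun g => c ∉ ends g) c = 0 := by
    refine degree_eq_zero_of_not_mem ?_
    intro hmem
    obtain ⟨g, hg, hcg⟩ := mem_support_iff.1 hmem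
    exact (Finset.mem_filter.1 hg).2 hcg
  have hdeq : ∀ y : V, y ≠ c → y ≠ z →
      degree ends (P.filter fun g => c ∉ ends g) y = degree ends P y := by
    intro y hyc hyz
    rw [degree_eq_sum_ctb, degree_eq_sum_ctb]
    refine Finset.sum_subset (Finset.filter_subset _ _) ?_
    intro g hg hng
    rw [Finset.mem_filter] at hng
    push_neg at hng
    have hcg : c ∈ ends g := hng hg
    have hgf : g = f := huniq g hg hcg
    subst hgf
    refine ctb_eq_zero ?_
    rw [hends, Sym2.mem_iff]
    tauto
  have hdne : d ≠ z := fun h => hzd h.symm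
  have hdc : d ≠ c := Ne.symm hcd
  have hodd : Odd (degree ends (P.filter fun g => c ∉ ends g) d) := by
    rw [hdeq d hdc hdne, hdd1]; exact odd_one
  obtain ⟨y, hyne, hry, hoddy⟩ := odd_pair hodd
  have hyc : y ≠ c := by
    intro h'
    rw [h', hdegc0] at hoddy
    simp at hoddy
  by_cases hyz : y = z
  · exact ⟨f, hf, z, hends, hzc, Or.inr (hyz ▸ hry)⟩
  · exfalso
    have hyS : y ∈ support ends P := by
      refine support_mono (Finset.filter_subset (fun g => c ∉ ends g) P) ?_
      rw [mem_support_iff_degree_pos]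
      rcases hoddy with ⟨k, hk⟩
      omega
    rw [hdeq y hyc hyz] at hoddy
    by_cases hyd : y = d
    · exact hyne hyd
    · rw [hint y hyS hyc hyd] at hoddy
      rcases hoddy with ⟨k, hk⟩
      omega

end Outside


section Beta
variable {ends : E → Sym2 V} {sgn : E → Bool} {Cx : E → Finset E} {A : Finset E}

lemma base_path
    (hAcyc : ∀ C ⊆ (Finset.univ.filter fun e => sgn e = false), ¬ IsCircuit ends C)
    (hCx : ∀ x : E, sgn x = true → IsCircuit ends (Cx x) ∧
      Cx x ⊆ insert x (Finset.univ.filter fun e => sgn e = false) ∧ x ∈ Cx x)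
    (hA : ∀ a ∈ A, sgn a = true)
    {a₀ : E} (ha₀ : a₀ ∈ A) (hd₀ : ¬ (ends a₀).IsDiag) :
    ∃ p q : V, p ≠ q ∧
      p ∈ support ends ((A.biUnion Cx) ∩ (Finset.univ.filter fun e => sgn e = false)) ∧
      q ∈ support ends ((A.biUnion Cx) ∩ (Finset.univ.filter fun e => sgn e = false)) := by
  obtain ⟨p, q, hpq⟩ := sym2_cases (ends a₀)
  have hne : p ≠ q := by
    intro h'
    rw [hpq, h'] at hd₀
    exact hd₀ (Sym2.mk_isDiag_iff.2 rfl)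
  have hsubT : (Cx a₀).erase a₀ ⊆ (Finset.univ.filter fun e => sgn e = false) := by
    intro f hf
    rw [Finset.mem_erase] at hf
    rcases Finset.mem_insert.1 ((hCx a₀ (hA a₀ ha₀)).2.1 hf.2) with h' | h'
    · exact absurd h' hf.1
    · exact h'
  have hpath := circuit_minus_edge hAcyc (hCx a₀ (hA a₀ ha₀)).1
    (hCx a₀ (hA a₀ ha₀)).2.2 hpq hne hsubT
  have hsubF : (Cx a₀).erase a₀ ⊆
      (A.biUnion Cx) ∩ (Finset.univ.filter fun e => sgn e = false) := by
    refine Finset.subset_inter ?_ hsubT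
    intro f hf
    exact Finset.mem_biUnion.2 ⟨a₀, ha₀, (Finset.erase_subset _ _) hf⟩
  exact ⟨p, q, hne, support_mono hsubF hpath.2.2.2.1, support_mono hsubF hpath.2.2.2.2.1⟩

lemma suppD_univ
    (h2c : TwoConnected ends)
    (hT : IsSpanningTree ends (Finset.univ.filter fun e => sgn e = false))
    (hCx : ∀ x : E, sgn x = true → IsCircuit ends (Cx x) ∧
      Cx x ⊆ insert x (Finset.univ.filter fun e => sgn e = false) ∧ x ∈ Cx x)
    (hA : ∀ a ∈ A, sgn a = true)
    (hconnD : ConnectedOn ends (A.biUnion Cx))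
    (hnoloop : ∀ x : E, sgn x = true → x ∉ A → ¬ IsLoop ends x)
    {a₀ : E} (ha₀ : a₀ ∈ A) (hd₀ : ¬ (ends a₀).IsDiag)
    (hβ : ∀ x : E, sgn x = true → x ∉ A → (A.biUnion Cx) ∩ Cx x = ∅) :
    support ends (A.biUnion Cx) = Finset.univ := by
  by_contra hne
  have hAcyc := hT.2
  have hTconn := hT.1
  obtain ⟨w, hw⟩ : ∃ w, w ∉ support ends (A.biUnion Cx) := by
    by_contra h'
    push_neg at h'
    exact hne (Finset.eq_univ_iff_forall.2 h')
  have hFconn := connF hAcyc hCx hA hconnD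
  have hsuppF := suppF_eq hAcyc hCx hA hconnD ha₀ hd₀
  have hFT : (A.biUnion Cx) ∩ (Finset.univ.filter fun e => sgn e = false)
      ⊆ (Finset.univ.filter fun e => sgn e = false) := Finset.inter_subset_right
  obtain ⟨p₀, q₀, hp₀q₀, hp₀F, hq₀F⟩ := base_path hAcyc hCx hA ha₀ hd₀
  have hp₀S : p₀ ∈ support ends (A.biUnion Cx) := hsuppF ▸ hp₀F
  have hq₀S : q₀ ∈ support ends (A.biUnion Cx) := hsuppF ▸ hq₀F
  have hattuniq : ∀ {y p₁ p₂ : V},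
      Att ends (Finset.univ.filter fun e => sgn e = false) (support ends (A.biUnion Cx)) y p₁ →
      Att ends (Finset.univ.filter fun e => sgn e = false) (support ends (A.biUnion Cx)) y p₂ →
      p₁ = p₂ :=
    fun h₁ h₂ => att_unique hAcyc hFT hFconn hsuppF h₁ h₂
  have hattex : ∀ y, y ∉ support ends (A.biUnion Cx) →
      ∃ p, Att ends (Finset.univ.filter fun e => sgn e = false)
        (support ends (A.biUnion Cx)) y p :=
    fun y hy => att_exists hTconn hy hp₀S
  -- key geometric facts about a negative edge not in A
  have hxfacts : ∀ x : E, sgn x = true → x ∉ A →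
      (IsPath ends ((Cx x).erase x) = IsPath ends ((Cx x).erase x)) := fun _ _ _ => rfl
  -- the common sub-development for an x ∈ X \ A with ends s(c,d)
  have hsubTx : ∀ x : E, sgn x = true →
      (Cx x).erase x ⊆ (Finset.univ.filter fun e => sgn e = false) := by
    intro x hx f hf
    rw [Finset.mem_erase] at hf
    rcases Finset.mem_insert.1 ((hCx x hx).2.1 hf.2) with h' | h'
    · exact absurd h' hf.1
    · exact h'
  have honex : ∀ x : E, sgn x = true → x ∉ A → ∀ s₁ s₂ : V,
      s₁ ∈ support ends ((Cx x).erase x) → s₁ ∈ support ends (A.biUnion Cx) →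
      s₂ ∈ support ends ((Cx x).erase x) → s₂ ∈ support ends (A.biUnion Cx) →
      s₁ = s₂ := by
    intro x hx hxA s₁ s₂ h1P h1S h2P h2S
    have hFPempty : ((A.biUnion Cx) ∩ (Finset.univ.filter fun e => sgn e = false))
        ∩ ((Cx x).erase x) = ∅ := by
      rw [Finset.eq_empty_iff_forall_notMem]
      intro f hf
      rw [Finset.mem_inter, Finset.mem_inter, Finset.mem_erase] at hf
      have hmem : f ∈ (A.biUnion Cx) ∩ Cx x := Finset.mem_inter.2 ⟨hf.1.1, hf.2.2⟩
      rw [hβ x hx hxA] at hmem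
      exact absurd hmem (Finset.notMem_empty f)
    have hPconn : ConnectedOn ends ((Cx x).erase x) := by
      obtain ⟨c, d, hcd⟩ := sym2_cases (ends x)
      have hcdne : c ≠ d := by
        intro h'
        refine hnoloop x hx hxA ?_
        rw [IsLoop, hcd, h']
        exact Sym2.mk_isDiag_iff.2 rfl
      exact (circuit_minus_edge hAcyc (hCx x hx).1 (hCx x hx).2.2 hcd hcdne
        (hsubTx x hx)).2.1
    have := subtree_connect hAcyc hFT (hsubTx x hx) hFconn hPconn
      (hsuppF ▸ h1S) h1P (hsuppF ▸ h2S) h2P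
    rw [hFPempty] at this
    exact reach_empty this
  -- N1 : a negative edge from outside into the support attaches at its support end
  have hN1 : ∀ x : E, sgn x = true → x ∉ A → ∀ c d : V, ends x = s(c, d) →
      c ∈ support ends (A.biUnion Cx) → d ∉ support ends (A.biUnion Cx) →
      Att ends (Finset.univ.filter fun e => sgn e = false)
        (support ends (A.biUnion Cx)) d c := by
    intro x hx hxA c d hcd hcS hdS
    have hcdne : c ≠ d := fun h => hdS (h ▸ hcS)
    have hPx := circuit_minus_edge hAcyc (hCx x hx).1 (hCx x hx).2.2 hcd hcdne (hsubTx x hx)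
    have hnl : ∀ f ∈ (Cx x).erase x, ¬ (ends f).IsDiag :=
      fun f hf => tree_no_loop hAcyc ((hsubTx x hx) hf)
    obtain ⟨f, hf, z, hfz, hzc, hreach⟩ := path_avoid_endpoint hPx hnl
    have hzP : z ∈ support ends ((Cx x).erase x) :=
      mem_support_of hf (hfz ▸ Sym2.mem_mk_left _ _)
    have hcP : c ∈ support ends ((Cx x).erase x) := hPx.2.2.2.1
    have hzS : z ∉ support ends (A.biUnion Cx) :=
      fun h => hzc (honex x hx hxA z c hzP h hcP hcS)
    refine ⟨hdS, hcS, f, (hsubTx x hx) hf, z, hfz, hzS, ?_⟩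
    rcases hreach with hzd | hr
    · rw [hzd]; exact Relation.ReflTransGen.refl
    · refine outReach_of_reach ?_ ?_ hr
      · intro g hg
        exact (hsubTx x hx) ((Finset.filter_subset _ _) hg)
      · intro g hg y hy
        rw [Finset.mem_filter] at hg
        intro hyS
        have hyP : y ∈ support ends ((Cx x).erase x) := mem_support_of hg.1 hy
        exact hg.2 ((honex x hx hxA y c hyP hyS hcP hcS) ▸ hy)
  -- N2 : a negative edge between two outside vertices forces equal attachments
  have hN2 : ∀ x : E, sgn x = true → x ∉ A → ∀ c d : V, ends x = s(c, d) →
      c ∉ support ends (A.biUnion Cx) → d ∉ support ends (A.biUnion Cx) →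
      ∀ pc pd, Att ends (Finset.univ.filter fun e => sgn e = false)
          (support ends (A.biUnion Cx)) c pc →
        Att ends (Finset.univ.filter fun e => sgn e = false)
          (support ends (A.biUnion Cx)) d pd → pc = pd := by
    intro x hx hxA c d hcd hcS hdS pc pd hac had
    by_cases hor : OutReach ends (Finset.univ.filter fun e => sgn e = false)
        (support ends (A.biUnion Cx)) c d
    · exact hattuniq (att_extend (outReach_symm hor) hdS hac) had
    · have hcdne : c ≠ d := fun h => hor (h ▸ Relation.ReflTransGen.refl)
      have hPx := circuit_minus_edge hAcyc (hCx x hx).1 (hCx x hx).2.2 hcd hcdne (hsubTx x hx)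
      have hcP : c ∈ support ends ((Cx x).erase x) := hPx.2.2.2.1
      have hdP : d ∈ support ends ((Cx x).erase x) := hPx.2.2.2.2.1
      obtain ⟨sv, hsvP, hsvS⟩ : ∃ sv, sv ∈ support ends ((Cx x).erase x) ∧
          sv ∈ support ends (A.biUnion Cx) := by
        by_contra h'
        push_neg at h'
        refine hor (outReach_of_reach (hsubTx x hx) ?_ (hPx.2.1 c hcP d hdP))
        intro g hg y hy
        exact h' y (mem_support_of hg hy)
      have hsc : sv ≠ c := fun h => hcS (h ▸ hsvS)
      have hsd : sv ≠ d := fun h => hdS (h ▸ hsvS)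
      have houtP : ∀ g ∈ ((Cx x).erase x).filter (fun g => sv ∉ ends g), ∀ y ∈ ends g,
          y ∉ support ends (A.biUnion Cx) := by
        intro g hg y hy hyS
        rw [Finset.mem_filter] at hg
        have hyP : y ∈ support ends ((Cx x).erase x) := mem_support_of hg.1 hy
        exact hg.2 ((honex x hx hxA y sv hyP hyS hsvP hsvS) ▸ hy)
      have hsubfil : ((Cx x).erase x).filter (fun g => sv ∉ ends g)
          ⊆ (Finset.univ.filter fun e => sgn e = false) :=
        fun g hg => (hsubTx x hx) ((Finset.filter_subset _ _) hg)
      have hnocd : ¬ Reach ends (((Cx x).erase x).filter fun g => sv ∉ ends g) c d :=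
        fun hr => hor (outReach_of_reach hsubfil houtP hr)
      rcases path_avoid_vertex hPx hsc hsd with ⟨f, hfP, z, hfz, hzs, hzr⟩ | hr
      swap
      · exact absurd hr hnocd
      rcases path_avoid_vertex (isPath_symm hPx) hsd hsc with ⟨f', hf'P, z', hfz', hz's, hz'r⟩ | hr'
      swap
      · exact absurd (reach_symm hr') hnocd
      have hzS : z ∉ support ends (A.biUnion Cx) := by
        intro h'
        exact hzs (honex x hx hxA z sv
          (mem_support_of hfP (hfz ▸ Sym2.mem_mk_left _ _)) h' hsvP hsvS)
      have hz'S : z' ∉ support ends (A.biUnion Cx) := by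
        intro h'
        exact hz's (honex x hx hxA z' sv
          (mem_support_of hf'P (hfz' ▸ Sym2.mem_mk_left _ _)) h' hsvP hsvS)
      have hattc : Att ends (Finset.univ.filter fun e => sgn e = false)
          (support ends (A.biUnion Cx)) c sv := by
        refine ⟨hcS, hsvS, f, (hsubTx x hx) hfP, z, hfz, hzS, ?_⟩
        rcases hzr with hzc | hrz
        · rw [hzc]; exact Relation.ReflTransGen.refl
        · exact outReach_of_reach hsubfil houtP hrz
      have hattd : Att ends (Finset.univ.filter fun e => sgn e = false)
          (support ends (A.biUnion Cx)) d sv := by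
        refine ⟨hdS, hsvS, f', (hsubTx x hx) hf'P, z', hfz', hz'S, ?_⟩
        rcases hz'r with hzd | hrz
        · rw [hzd]; exact Relation.ReflTransGen.refl
        · exact outReach_of_reach hsubfil houtP hrz
      rw [hattuniq hac hattc, hattuniq had hattd]
  -- the attachment point of w
  obtain ⟨p, hattp⟩ := hattex w hw
  have hpS : p ∈ support ends (A.biUnion Cx) := hattp.2.1
  -- one closure step
  have hstep : ∀ y z : V, y ∉ support ends (A.biUnion Cx) →
      Att ends (Finset.univ.filter fun e => sgn e = false)
        (support ends (A.biUnion Cx)) y p →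
      z ≠ p → (∃ e : E, ends e = s(y, z)) →
      z ∉ support ends (A.biUnion Cx) ∧
        Att ends (Finset.univ.filter fun e => sgn e = false)
          (support ends (A.biUnion Cx)) z p := by
    intro y z hyS hay hzp he
    obtain ⟨e, hyz⟩ := he
    by_cases hsgn : sgn e = false
    · have heT : e ∈ (Finset.univ.filter fun e => sgn e = false) :=
        Finset.mem_filter.2 ⟨Finset.mem_univ _, hsgn⟩
      by_cases hzS : z ∈ support ends (A.biUnion Cx)
      · have hayz : Att ends (Finset.univ.filter fun e => sgn e = false)
            (support ends (A.biUnion Cx)) y z :=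
          ⟨hyS, hzS, e, heT, y, hyz, hyS, Relation.ReflTransGen.refl⟩
        exact absurd (hattuniq hay hayz).symm hzp
      · refine ⟨hzS, att_extend ?_ hzS hay⟩
        exact Relation.ReflTransGen.single ⟨hzS, hyS, e, heT, hyz.trans Sym2.eq_swap⟩
    · have hsgnT : sgn e = true := by
        revert hsgn
        cases sgn e <;> simp
      by_cases heA : e ∈ A
      · exfalso
        refine hyS (mem_support_of ?_ (hyz ▸ Sym2.mem_mk_left _ _))
        exact Finset.mem_biUnion.2 ⟨e, heA, (hCx e hsgnT).2.2⟩
      · by_cases hzS : z ∈ support ends (A.biUnion Cx)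
        · have := hN1 e hsgnT heA z y (hyz.trans Sym2.eq_swap) hzS hyS
          exact absurd (hattuniq hay this).symm hzp
        · obtain ⟨q, haq⟩ := hattex z hzS
          have hpq : p = q := hN2 e hsgnT heA y z hyz hyS hzS p q hay haq
          exact ⟨hzS, hpq ▸ haq⟩
  -- choose b ∈ suppD different from p
  obtain ⟨b, hbS, hbp⟩ : ∃ b, b ∈ support ends (A.biUnion Cx) ∧ b ≠ p := by
    by_cases h' : p₀ = p
    · refine ⟨q₀, hq₀S, fun h => hp₀q₀ ?_⟩
      rw [h', h]
    · exact ⟨p₀, hp₀S, h'⟩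
  have hwp : w ≠ p := fun h => hw (h ▸ hpS)
  have hwb : w ≠ b := fun h => hw (h ▸ hbS)
  have hwrb : Reach ends (Finset.univ.filter fun e => sgn e = false) w b := hTconn w b
  have hwsup : w ∈ support ends (Finset.univ : Finset E) :=
    support_mono (Finset.subset_univ _) (reach_left_mem_support hwrb hwb)
  have hbsup : b ∈ support ends (Finset.univ : Finset E) :=
    support_mono (Finset.subset_univ _) (reach_right_mem_support hwrb hwb)
  have hnra : ¬ ReachAvoid ends (Finset.univ : Finset E) p w b := by
    intro hra
    have hmem : ∀ {y : V}, ReachAvoid ends (Finset.univ : Finset E) p w y →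
        (y ∉ support ends (A.biUnion Cx) ∧
          Att ends (Finset.univ.filter fun e => sgn e = false)
            (support ends (A.biUnion Cx)) y p) := by
      intro y hy
      induction hy with
      | refl => exact ⟨hw, hattp⟩
      | tail _ step ih =>
        obtain ⟨hcp, hdp, e, _, hcd⟩ := step
        exact hstep _ _ ih.1 ih.2 hdp ⟨e, hcd⟩
    exact (hmem hra).1 hbS
  exact h2c.2 p ⟨w, hwsup, b, hbsup, hwp, hbp,
    reach_mono (Finset.subset_univ _) hwrb, hnra⟩

end Beta

/-- If `D_A` is 2-connected and `X' − A` contains no loop, then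
`A = X'` and `D_A = G'`, or some `x ∈ X' − A` has `D_A ∩ C_x` a non-trivial path
(and `D_{A∪{x}}` is 2-connected), or `A` contains only loops. -/
theorem statement14 {V E : Type} [Fintype V] [Fintype E] [DecidableEq V] [DecidableEq E]
    (ends : E → Sym2 V) (sgn : E → Bool)
    (h2c : TwoConnected ends)
    (hT : IsSpanningTree ends (Finset.univ.filter fun e => sgn e = false))
    (Cx : E → Finset E)
    (hCx : ∀ x : E, sgn x = true →
      IsCircuit ends (Cx x) ∧
      Cx x ⊆ insert x (Finset.univ.filter fun e => sgn e = false) ∧ x ∈ Cx x)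
    (A : Finset E) (hA : ∀ a ∈ A, sgn a = true)
    (hDA : TwoConnectedOn ends (A.biUnion Cx))
    (hnoloop : ∀ x : E, sgn x = true → x ∉ A → ¬ IsLoop ends x) :
    (A = (Finset.univ.filter fun e => sgn e = true) ∧ A.biUnion Cx = Finset.univ) ∨
    (∃ x : E, sgn x = true ∧ x ∉ A ∧
      (∃ u v : V, IsPath ends ((A.biUnion Cx) ∩ Cx x) u v) ∧
      TwoConnectedOn ends ((insert x A).biUnion Cx)) ∨
    (∀ a ∈ A, IsLoop ends a) := by
  by_cases hloops : ∀ a ∈ A, IsLoop ends a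
  · exact Or.inr (Or.inr hloops)
  push_neg at hloops
  obtain ⟨a₀, ha₀, hd₀⟩ := hloops
  have hd₀' : ¬ (ends a₀).IsDiag := hd₀
  have hAcyc := hT.2
  have hconnD := hDA.1
  have hsubTx : ∀ x : E, sgn x = true →
      (Cx x).erase x ⊆ (Finset.univ.filter fun e => sgn e = false) := by
    intro x hx f hf
    rw [Finset.mem_erase] at hf
    rcases Finset.mem_insert.1 ((hCx x hx).2.1 hf.2) with h' | h'
    · exact absurd h' hf.1
    · exact h'
  by_cases hax : ∃ x : E, sgn x = true ∧ x ∉ A ∧ ((A.biUnion Cx) ∩ Cx x).Nonempty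
  · obtain ⟨x, hx, hxA, hQne⟩ := hax
    right; left
    have hnl : ¬ (ends x).IsDiag := hnoloop x hx hxA
    obtain ⟨u, v, hpath, huD, hvD, huC, hvC, huv⟩ :=
      Q_path hAcyc hCx hA hconnD hx hxA hnl hQne
    refine ⟨x, hx, hxA, ⟨u, v, hpath⟩, ?_⟩
    have hbi : (insert x A).biUnion Cx = Cx x ∪ A.biUnion Cx := Finset.biUnion_insert
    rw [hbi]
    exact ear_two_connected hDA (hCx x hx).1 huC hvC huD hvD huv
  · push_neg at hax
    have hβ : ∀ x : E, sgn x = true → x ∉ A → (A.biUnion Cx) ∩ Cx x = ∅ :=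
      fun x hx hxA => hax x hx hxA
    have hsupp := suppD_univ h2c hT hCx hA hconnD hnoloop ha₀ hd₀' hβ
    have hFconn := connF hAcyc hCx hA hconnD
    have hsuppF := suppF_eq hAcyc hCx hA hconnD ha₀ hd₀'
    left
    have hAX : A = Finset.univ.filter fun e => sgn e = true := by
      apply Finset.Subset.antisymm
      · intro a ha
        exact Finset.mem_filter.2 ⟨Finset.mem_univ _, hA a ha⟩
      · intro x hxX
        by_contra hxA
        have hx : sgn x = true := (Finset.mem_filter.1 hxX).2
        have hnl : ¬ (ends x).IsDiag := hnoloop x hx hxA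
        obtain ⟨c, d, hcd⟩ := sym2_cases (ends x)
        have hcdne : c ≠ d := by
          intro h'
          rw [hcd, h'] at hnl
          exact hnl (Sym2.mk_isDiag_iff.2 rfl)
        have hPx := circuit_minus_edge hAcyc (hCx x hx).1 (hCx x hx).2.2 hcd hcdne
          (hsubTx x hx)
        have hcF : c ∈ support ends
            ((A.biUnion Cx) ∩ (Finset.univ.filter fun e => sgn e = false)) := by
          rw [hsuppF, hsupp]
          exact Finset.mem_univ _
        have hdF : d ∈ support ends
            ((A.biUnion Cx) ∩ (Finset.univ.filter fun e => sgn e = false)) := by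
          rw [hsuppF, hsupp]
          exact Finset.mem_univ _
        have habs := subtree_absorb hAcyc hPx (hsubTx x hx) Finset.inter_subset_right
          hFconn hcF hdF
        obtain ⟨f, hf⟩ := hPx.1
        have hfQ : f ∈ (A.biUnion Cx) ∩ Cx x :=
          Finset.mem_inter.2 ⟨Finset.inter_subset_left (habs hf), (Finset.erase_subset _ _) hf⟩
        rw [hβ x hx hxA] at hfQ
        exact absurd hfQ (Finset.notMem_empty f)
    refine ⟨hAX, ?_⟩
    apply Finset.eq_univ_iff_forall.2
    intro e
    by_cases hsgn : sgn e = true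
    · have heA : e ∈ A := by
        rw [hAX]
        exact Finset.mem_filter.2 ⟨Finset.mem_univ _, hsgn⟩
      exact Finset.mem_biUnion.2 ⟨e, heA, (hCx e hsgn).2.2⟩
    · have hsgnF : sgn e = false := by
        revert hsgn
        cases sgn e <;> simp
      have heT : e ∈ (Finset.univ.filter fun e => sgn e = false) :=
        Finset.mem_filter.2 ⟨Finset.mem_univ _, hsgnF⟩
      obtain ⟨c, d, hcd⟩ := sym2_cases (ends e)
      have hcF : c ∈ support ends
          ((A.biUnion Cx) ∩ (Finset.univ.filter fun e => sgn e = false)) := by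
        rw [hsuppF, hsupp]
        exact Finset.mem_univ _
      have hdF : d ∈ support ends
          ((A.biUnion Cx) ∩ (Finset.univ.filter fun e => sgn e = false)) := by
        rw [hsuppF, hsupp]
        exact Finset.mem_univ _
      have hmem := tree_edge_mem hAcyc Finset.inter_subset_right hFconn heT hcd hcF hdF
      exact Finset.inter_subset_left hmem

end SignedCircuitCover
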